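/- arXiv:2104.12445 — 4 statements merged into one kernel-verified Lean document; each statement's English description precedes it below -/
import Mathlib

section
/- The number of signed permutations of {1,...,n} with exactly k strictly positive descents (descents at positions 1,...,n-1 in the window notation) equals 2^n times the Eulerian number A(n,k). -/
/-- A signed permutation of `{1,...,n}` in window notation: `u i` for `i ∈ {1,...,n}`
is the `i`-th letter, with absolute values forming a permutation of `{1,...,n}`;
`u` is `0` outside `{1,...,n}`. -/
def IsSignedPerm (n : ℕ) (u : ℕ → ℤ) : Prop :=
  (∀ i ∈ Finset.Icc 1 n, 1 ≤ |u i| ∧ |u i| ≤ (n : ℤ)) ∧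
  (∀ i ∈ Finset.Icc 1 n, ∀ j ∈ Finset.Icc 1 n, |u i| = |u j| → i = j) ∧
  (∀ i, i ∉ Finset.Icc 1 n → u i = 0)

/-- An (ordinary) permutation of `{1,...,n}`, as a signed permutation with all letters positive. -/
def IsPermWord (n : ℕ) (w : ℕ → ℤ) : Prop :=
  IsSignedPerm n w ∧ ∀ i ∈ Finset.Icc 1 n, 0 < w i

/-- Number of (type A, i.e. strictly positive) descents: indices `i ∈ {1,...,n-1}` with `u i > u (i+1)`. -/
def descA (n : ℕ) (u : ℕ → ℤ) : ℕ :=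
  ((Finset.Icc 1 (n - 1)).filter (fun i => u (i + 1) < u i)).card

/-- Number of type B descents: indices `i ∈ {0,...,n-1}` with `u i > u (i+1)`, where `u 0 = 0`. -/
def descB (n : ℕ) (u : ℕ → ℤ) : ℕ :=
  ((Finset.range n).filter (fun i => u (i + 1) < u i)).card

/-- Number of type D descents: indices `i ∈ {0,...,n-1}` with `u i > u (i+1)`, where `u_0 := -u_2`. -/
def descD (n : ℕ) (u : ℕ → ℤ) : ℕ :=
  ((Finset.range n).filter (fun i => u (i + 1) < (if i = 0 then -(u 2) else u i))).card

/-- A signed permutation is even-signed if it has an even number of negative letters. -/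
def IsEvenSigned (n : ℕ) (u : ℕ → ℤ) : Prop :=
  Even ((Finset.Icc 1 n).filter (fun i => u i < 0)).card

/-- Type A Eulerian number `A(n,k)`. -/
noncomputable def eulA (n k : ℕ) : ℕ := {w : ℕ → ℤ | IsPermWord n w ∧ descA n w = k}.ncard

/-- Type B Eulerian number `B(n,k)`. -/
noncomputable def eulB (n k : ℕ) : ℕ := {u : ℕ → ℤ | IsSignedPerm n u ∧ descB n u = k}.ncard

/-- Type D Eulerian number `D(n,k)`. -/
noncomputable def eulD (n k : ℕ) : ℕ :=
  {u : ℕ → ℤ | IsSignedPerm n u ∧ IsEvenSigned n u ∧ descD n u = k}.ncard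


namespace SPaux

open Finset

/-- The value set of a signed permutation whose negated values are exactly `S`. -/
def V (n : ℕ) (S : Finset ℕ) : Finset ℤ :=
  S.image (fun a : ℕ => -(a : ℤ)) ∪ ((Finset.Icc 1 n) \ S).image (fun a : ℕ => (a : ℤ))

lemma mem_V {n : ℕ} {S : Finset ℕ} {x : ℤ} :
    x ∈ V n S ↔ (∃ a ∈ S, x = -(a : ℤ)) ∨ (∃ a ∈ Finset.Icc 1 n \ S, x = (a : ℤ)) := by
  simp [V, eq_comm]

lemma card_V {n : ℕ} {S : Finset ℕ} (hS : S ⊆ Finset.Icc 1 n) : (V n S).card = n := by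
  have h1 : Function.Injective (fun a : ℕ => -(a : ℤ)) := by
    intro a b h; simpa using h
  have h2 : Function.Injective (fun a : ℕ => (a : ℤ)) := by
    intro a b h; simpa using h
  have hd : Disjoint (S.image (fun a : ℕ => -(a : ℤ)))
      (((Finset.Icc 1 n) \ S).image (fun a : ℕ => (a : ℤ))) := by
    rw [Finset.disjoint_left]
    rintro x hx hy
    simp only [Finset.mem_image, Finset.mem_sdiff, Finset.mem_Icc] at hx hy
    obtain ⟨a, ha, rfl⟩ := hx
    obtain ⟨b, ⟨⟨hb1, _⟩, _⟩, hb⟩ := hy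
    have := hS ha
    simp only [Finset.mem_Icc] at this
    omega
  rw [V, Finset.card_union_of_disjoint hd, Finset.card_image_of_injective _ h1,
    Finset.card_image_of_injective _ h2, Finset.card_sdiff_of_subset hS, Nat.card_Icc]
  have := Finset.card_le_card hS
  rw [Nat.card_Icc] at this
  omega

lemma V_abs {n : ℕ} {S : Finset ℕ} (hS : S ⊆ Finset.Icc 1 n) {x : ℤ} (hx : x ∈ V n S) :
    1 ≤ |x| ∧ |x| ≤ (n : ℤ) := by
  rcases mem_V.1 hx with ⟨a, ha, rfl⟩ | ⟨a, ha, rfl⟩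
  · have := hS ha; simp only [Finset.mem_Icc] at this
    rw [abs_neg, Nat.abs_cast]; exact ⟨by exact_mod_cast this.1, by exact_mod_cast this.2⟩
  · simp only [Finset.mem_sdiff, Finset.mem_Icc] at ha
    rw [Nat.abs_cast]; exact ⟨by exact_mod_cast ha.1.1, by exact_mod_cast ha.1.2⟩

lemma V_abs_inj {n : ℕ} {S : Finset ℕ} {x y : ℤ} (hx : x ∈ V n S) (hy : y ∈ V n S)
    (h : |x| = |y|) : x = y := by
  rcases mem_V.1 hx with ⟨a, ha, rfl⟩ | ⟨a, ha, rfl⟩ <;>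
    rcases mem_V.1 hy with ⟨b, hb, rfl⟩ | ⟨b, hb, rfl⟩ <;>
      simp only [abs_neg, Nat.abs_cast, Nat.cast_inj] at h <;> subst h
  · rfl
  · simp only [Finset.mem_sdiff] at hb; exact absurd ha hb.2
  · simp only [Finset.mem_sdiff] at ha; exact absurd hb ha.2
  · rfl

/-- `psi n S r` is the `r`-th smallest element of `V n S`, for `r ∈ {1,...,n}`. -/
def psi (n : ℕ) (S : Finset ℕ) (r : ℕ) : ℤ :=
  ((V n S).sort (· ≤ ·)).getD (r - 1) 0

lemma length_sort_V {n : ℕ} {S : Finset ℕ} (hS : S ⊆ Finset.Icc 1 n) :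
    ((V n S).sort (· ≤ ·)).length = n := by
  rw [Finset.length_sort, card_V hS]

lemma psi_mem {n : ℕ} {S : Finset ℕ} (hS : S ⊆ Finset.Icc 1 n) {r : ℕ}
    (hr : r ∈ Finset.Icc 1 n) : psi n S r ∈ V n S := by
  simp only [Finset.mem_Icc] at hr
  have h1 : r - 1 < ((V n S).sort (· ≤ ·)).length := by rw [length_sort_V hS]; omega
  rw [psi, List.getD_eq_getElem _ _ h1]
  exact (Finset.mem_sort _).1 (List.getElem_mem h1)

lemma psi_lt_iff {n : ℕ} {S : Finset ℕ} (hS : S ⊆ Finset.Icc 1 n) {a b : ℕ}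
    (ha : a ∈ Finset.Icc 1 n) (hb : b ∈ Finset.Icc 1 n) :
    a < b ↔ psi n S a < psi n S b := by
  simp only [Finset.mem_Icc] at ha hb
  have hs := (Finset.sortedLT_sort (V n S)).pairwise
  have key : ∀ c d : ℕ, 1 ≤ c → c ≤ n → 1 ≤ d → d ≤ n → c < d →
      psi n S c < psi n S d := by
    intro c d hc1 hc2 hd1 hd2 hcd
    have h1 : c - 1 < ((V n S).sort (· ≤ ·)).length := by rw [length_sort_V hS]; omega
    have h2 : d - 1 < ((V n S).sort (· ≤ ·)).length := by rw [length_sort_V hS]; omega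
    rw [psi, psi, List.getD_eq_getElem _ _ h1, List.getD_eq_getElem _ _ h2]
    have := hs.rel_get_of_lt (a := ⟨c - 1, h1⟩) (b := ⟨d - 1, h2⟩) (by simp [Fin.lt_def]; omega)
    simpa [List.get_eq_getElem] using this
  constructor
  · intro h; exact key a b ha.1 ha.2 hb.1 hb.2 h
  · intro h
    by_contra hab
    push_neg at hab
    rcases Nat.lt_or_ge b a with h' | h'
    · exact absurd (key b a hb.1 hb.2 ha.1 ha.2 h') (by omega)
    · have : a = b := le_antisymm h' hab
      subst this; omega

lemma psi_inj {n : ℕ} {S : Finset ℕ} (hS : S ⊆ Finset.Icc 1 n) {a b : ℕ}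
    (ha : a ∈ Finset.Icc 1 n) (hb : b ∈ Finset.Icc 1 n) (h : psi n S a = psi n S b) :
    a = b := by
  rcases lt_trichotomy a b with h' | h' | h'
  · exact absurd ((psi_lt_iff hS ha hb).1 h') (by omega)
  · exact h'
  · exact absurd ((psi_lt_iff hS hb ha).1 h') (by omega)

lemma psi_surj {n : ℕ} {S : Finset ℕ} (hS : S ⊆ Finset.Icc 1 n) {x : ℤ} (hx : x ∈ V n S) :
    ∃ r ∈ Finset.Icc 1 n, psi n S r = x := by
  have : x ∈ (V n S).sort (· ≤ ·) := (Finset.mem_sort _).2 hx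
  obtain ⟨j, hj, hxj⟩ := List.mem_iff_getElem.1 this
  have hjn : j < n := by rw [length_sort_V hS] at hj; exact hj
  refine ⟨j + 1, by simp only [Finset.mem_Icc]; omega, ?_⟩
  rw [psi, Nat.add_sub_cancel, List.getD_eq_getElem _ _ hj, hxj]

/-- Reconstruct a signed permutation from a sign set and an ordinary permutation word. -/
def F (n : ℕ) (S : Finset ℕ) (w : ℕ → ℤ) : ℕ → ℤ :=
  fun i => if i ∈ Finset.Icc 1 n then psi n S (w i).toNat else 0

lemma mem_both {n i : ℕ} (hi : i ∈ Finset.Icc 1 (n - 1)) :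
    i ∈ Finset.Icc 1 n ∧ i + 1 ∈ Finset.Icc 1 n := by
  simp only [Finset.mem_Icc] at *; omega

end SPaux
namespace SPaux

lemma toNat_facts {n : ℕ} {w : ℕ → ℤ} (hw : IsPermWord n w) {i : ℕ}
    (hi : i ∈ Finset.Icc 1 n) :
    (w i).toNat ∈ Finset.Icc 1 n ∧ ((w i).toNat : ℤ) = w i := by
  have h1 := hw.1.1 i hi
  have h2 := hw.2 i hi
  rw [abs_of_pos h2] at h1
  obtain ⟨ha1, ha2⟩ := h1
  simp only [Finset.mem_Icc]
  omega

lemma F_mem {n : ℕ} {S : Finset ℕ} {w : ℕ → ℤ} (hS : S ⊆ Finset.Icc 1 n)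
    (hw : IsPermWord n w) :
    IsSignedPerm n (F n S w) ∧ descA n (F n S w) = descA n w := by
  refine ⟨⟨?_, ?_, ?_⟩, ?_⟩
  · intro i hi
    simp only [F, if_pos hi]
    exact V_abs hS (psi_mem hS (toNat_facts hw hi).1)
  · intro i hi j hj habs
    simp only [F, if_pos hi, if_pos hj] at habs
    have h1 := V_abs_inj (psi_mem hS (toNat_facts hw hi).1) (psi_mem hS (toNat_facts hw hj).1) habs
    have h2 := psi_inj hS (toNat_facts hw hi).1 (toNat_facts hw hj).1 h1
    have e1 := (toNat_facts hw hi).2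
    have e2 := (toNat_facts hw hj).2
    have : w i = w j := by omega
    exact hw.1.2.1 i hi j hj (by rw [this])
  · intro i hi
    simp only [F, if_neg hi]
  · unfold descA
    congr 1
    apply Finset.filter_congr
    intro i hi
    obtain ⟨hi1, hi2⟩ := mem_both hi
    simp only [F, if_pos hi1, if_pos hi2]
    rw [← psi_lt_iff hS (toNat_facts hw hi2).1 (toNat_facts hw hi1).1]
    have e1 := (toNat_facts hw hi1).2
    have e2 := (toNat_facts hw hi2).2
    omega

lemma mem_S_iff {n : ℕ} {S : Finset ℕ} {w : ℕ → ℤ} (hS : S ⊆ Finset.Icc 1 n)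
    (hw : IsPermWord n w) {a : ℕ} (ha : a ∈ Finset.Icc 1 n) :
    a ∈ S ↔ ∃ i ∈ Finset.Icc 1 n, F n S w i = -(a : ℤ) := by
  classical
  constructor
  · intro haS
    have hVa : -(a : ℤ) ∈ V n S := mem_V.2 (Or.inl ⟨a, haS, rfl⟩)
    obtain ⟨r, hr, hpsir⟩ := psi_surj hS hVa
    -- the map i ↦ (w i).toNat is a bijection of Icc 1 n
    have himg : (Finset.Icc 1 n).image (fun i => (w i).toNat) = Finset.Icc 1 n := by
      apply Finset.eq_of_subset_of_card_le
      · intro x hx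
        simp only [Finset.mem_image] at hx
        obtain ⟨i, hi, rfl⟩ := hx
        exact (toNat_facts hw hi).1
      · rw [Finset.card_image_of_injOn]
        intro i hi j hj hij
        simp only [Finset.mem_coe] at hi hj
        have hij' : (w i).toNat = (w j).toNat := hij
        have e1 := (toNat_facts hw hi).2
        have e2 := (toNat_facts hw hj).2
        have : w i = w j := by omega
        exact hw.1.2.1 i hi j hj (by rw [this])
    have : r ∈ (Finset.Icc 1 n).image (fun i => (w i).toNat) := by rw [himg]; exact hr
    simp only [Finset.mem_image] at this
    obtain ⟨i, hi, hri⟩ := this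
    exact ⟨i, hi, by simp only [F, if_pos hi]; rw [hri, hpsir]⟩
  · rintro ⟨i, hi, hFi⟩
    simp only [F, if_pos hi] at hFi
    have hV : -(a : ℤ) ∈ V n S := hFi ▸ psi_mem hS (toNat_facts hw hi).1
    rcases mem_V.1 hV with ⟨b, hb, heq⟩ | ⟨b, hb, heq⟩
    · have : a = b := by exact_mod_cast neg_inj.1 heq
      rwa [this]
    · simp only [Finset.mem_sdiff, Finset.mem_Icc] at hb ha
      have : (a : ℤ) = -(b : ℤ) := by linarith [heq]
      have h1 : (1 : ℤ) ≤ a := by exact_mod_cast ha.1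
      have h2 : (1 : ℤ) ≤ b := by exact_mod_cast hb.1.1
      omega

lemma F_inj {n : ℕ} {S S' : Finset ℕ} {w w' : ℕ → ℤ} (hS : S ⊆ Finset.Icc 1 n)
    (hS' : S' ⊆ Finset.Icc 1 n) (hw : IsPermWord n w) (hw' : IsPermWord n w')
    (h : F n S w = F n S' w') : S = S' ∧ w = w' := by
  have hSS : S = S' := by
    ext a
    by_cases haI : a ∈ Finset.Icc 1 n
    · rw [mem_S_iff hS hw haI, mem_S_iff hS' hw' haI, h]
    · constructor
      · intro ha; exact absurd (hS ha) haI
      · intro ha; exact absurd (hS' ha) haI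
  subst hSS
  refine ⟨rfl, funext fun i => ?_⟩
  by_cases hi : i ∈ Finset.Icc 1 n
  · have hF := congrFun h i
    simp only [F, if_pos hi] at hF
    have h2 := psi_inj hS (toNat_facts hw hi).1 (toNat_facts hw' hi).1 hF
    have e1 := (toNat_facts hw hi).2
    have e2 := (toNat_facts hw' hi).2
    omega
  · rw [hw.1.2.2 i hi, hw'.1.2.2 i hi]

lemma F_surj {n : ℕ} {u : ℕ → ℤ} (hu : IsSignedPerm n u) :
    ∃ S w, S ⊆ Finset.Icc 1 n ∧ IsPermWord n w ∧ descA n w = descA n u ∧ F n S w = u := by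
  classical
  obtain ⟨hb, hinjU, hz⟩ := hu
  have hval : ∀ i ∈ Finset.Icc 1 n, (1 ≤ u i ∧ u i ≤ (n : ℤ)) ∨
      (-(n : ℤ) ≤ u i ∧ u i ≤ -1) := by
    intro i hi
    have h1 := hb i hi
    rcases abs_cases (u i) with ⟨he, h0⟩ | ⟨he, h0⟩ <;> rw [he] at h1
    · left; omega
    · right; omega
  have huinj : ∀ i ∈ Finset.Icc 1 n, ∀ j ∈ Finset.Icc 1 n,
      (u i = u j ∨ u i = -u j) → i = j := by
    intro i hi j hj h
    exact hinjU i hi j hj (abs_eq_abs.2 h)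
  haveI : DecidablePred (fun a : ℕ => ∃ i ∈ Finset.Icc 1 n, u i = -(a : ℤ)) :=
    fun a => Finset.decidableExistsAndFinset
  set S : Finset ℕ :=
    (Finset.Icc 1 n).filter (fun a => ∃ i ∈ Finset.Icc 1 n, u i = -(a : ℤ)) with hSdef
  have hS : S ⊆ Finset.Icc 1 n := Finset.filter_subset _ _
  have himgsub : (Finset.Icc 1 n).image u ⊆ V n S := by
    intro x hx
    simp only [Finset.mem_image] at hx
    obtain ⟨i, hi, rfl⟩ := hx
    rcases hval i hi with ⟨h1, h2⟩ | ⟨h1, h2⟩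
    · -- positive letter
      set a := (u i).toNat with hadef
      have hcast : ((a : ℕ) : ℤ) = u i := Int.toNat_of_nonneg (by omega)
      have haI : a ∈ Finset.Icc 1 n := by simp only [Finset.mem_Icc]; omega
      have haS : a ∉ S := by
        intro hmem
        obtain ⟨-, j, hj, hju⟩ := Finset.mem_filter.1 hmem
        have : u j = -u i := by omega
        have hji : j = i := huinj j hj i hi (Or.inr (by rw [this]))
        rw [hji] at this
        omega
      exact mem_V.2 (Or.inr ⟨a, Finset.mem_sdiff.2 ⟨haI, haS⟩, by omega⟩)
    · -- negative letter
      set a := (-u i).toNat with hadef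
      have hcast : ((a : ℕ) : ℤ) = -u i := Int.toNat_of_nonneg (by omega)
      have haI : a ∈ Finset.Icc 1 n := by simp only [Finset.mem_Icc]; omega
      have haS : a ∈ S := Finset.mem_filter.2 ⟨haI, i, hi, by omega⟩
      exact mem_V.2 (Or.inl ⟨a, haS, by omega⟩)
  have himg : (Finset.Icc 1 n).image u = V n S := by
    apply Finset.eq_of_subset_of_card_le himgsub
    rw [card_V hS, Finset.card_image_of_injOn, Nat.card_Icc]
    · omega
    · intro i hi j hj hij
      simp only [Finset.mem_coe] at hi hj
      exact huinj i hi j hj (Or.inl hij)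
  have hex : ∀ i, ∃ r, (i ∈ Finset.Icc 1 n → r ∈ Finset.Icc 1 n ∧ psi n S r = u i) ∧
      (i ∉ Finset.Icc 1 n → r = 0) := by
    intro i
    by_cases hi : i ∈ Finset.Icc 1 n
    · obtain ⟨r, hr1, hr2⟩ := psi_surj hS (himg ▸ Finset.mem_image_of_mem u hi)
      exact ⟨r, fun _ => ⟨hr1, hr2⟩, fun h => absurd hi h⟩
    · exact ⟨0, fun h => absurd h hi, fun _ => rfl⟩
  choose r hr1 hr2 using hex
  refine ⟨S, fun i => ((r i : ℕ) : ℤ), hS, ⟨⟨?_, ?_, ?_⟩, ?_⟩, ?_, ?_⟩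
  · intro i hi
    obtain ⟨hri, -⟩ := hr1 i hi
    simp only [Finset.mem_Icc] at hri
    rw [Nat.abs_cast]
    exact ⟨by exact_mod_cast hri.1, by exact_mod_cast hri.2⟩
  · intro i hi j hj habs
    rw [Nat.abs_cast, Nat.abs_cast, Nat.cast_inj] at habs
    obtain ⟨hri, hpi⟩ := hr1 i hi
    obtain ⟨hrj, hpj⟩ := hr1 j hj
    apply huinj i hi j hj
    left
    rw [← hpi, ← hpj, habs]
  · intro i hi
    show ((r i : ℕ) : ℤ) = 0
    rw [hr2 i hi]; rfl
  · intro i hi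
    obtain ⟨hri, -⟩ := hr1 i hi
    simp only [Finset.mem_Icc] at hri
    show (0 : ℤ) < ((r i : ℕ) : ℤ)
    exact_mod_cast hri.1
  · unfold descA
    congr 1
    apply Finset.filter_congr
    intro i hi
    obtain ⟨hi1, hi2⟩ := mem_both hi
    obtain ⟨hri1, hpi1⟩ := hr1 i hi1
    obtain ⟨hri2, hpi2⟩ := hr1 (i + 1) hi2
    rw [← hpi1, ← hpi2, ← psi_lt_iff hS hri2 hri1, Nat.cast_lt]
  · funext i
    by_cases hi : i ∈ Finset.Icc 1 n
    · obtain ⟨hri, hpi⟩ := hr1 i hi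
      simp only [F, if_pos hi, Int.toNat_natCast]
      exact hpi
    · simp only [F, if_neg hi]
      exact (hz i hi).symm

end SPaux

/-- The number of signed permutations of `{1,...,n}` with exactly `k` strictly positive
descents equals `2^n` times the Eulerian number `A(n,k)`. -/
theorem signedPerm_positive_descents_count (n k : ℕ) :
    {u : ℕ → ℤ | IsSignedPerm n u ∧ descA n u = k}.ncard = 2 ^ n * eulA n k := by
  classical
  let P : Set (Finset ℕ) := ↑((Finset.Icc 1 n).powerset)
  let B : Set (ℕ → ℤ) := {w : ℕ → ℤ | IsPermWord n w ∧ descA n w = k}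
  let A : Set (ℕ → ℤ) := {u : ℕ → ℤ | IsSignedPerm n u ∧ descA n u = k}
  have hsub : ∀ S : Finset ℕ, S ∈ P → S ⊆ Finset.Icc 1 n := fun S hS =>
    Finset.mem_powerset.1 hS
  let G : P × B → A := fun p =>
    ⟨SPaux.F n p.1.1 p.2.1, by
      obtain ⟨hw, hd⟩ := p.2.2
      have h := SPaux.F_mem (hsub _ p.1.2) hw
      exact ⟨h.1, h.2.trans hd⟩⟩
  have hGinj : Function.Injective G := by
    rintro ⟨⟨S, hSP⟩, ⟨w, hwB⟩⟩ ⟨⟨S', hSP'⟩, ⟨w', hwB'⟩⟩ h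
    have h' : SPaux.F n S w = SPaux.F n S' w' := congrArg Subtype.val h
    obtain ⟨h1, h2⟩ := SPaux.F_inj (hsub _ hSP) (hsub _ hSP') hwB.1 hwB'.1 h'
    simp only [Prod.mk.injEq, Subtype.mk.injEq]
    exact ⟨h1, h2⟩
  have hGsurj : Function.Surjective G := by
    rintro ⟨u, hu, hdu⟩
    obtain ⟨S, w, hS, hw, hdw, hF⟩ := SPaux.F_surj hu
    exact ⟨⟨⟨S, Finset.mem_powerset.2 hS⟩, ⟨w, hw, hdw.trans hdu⟩⟩, Subtype.ext hF⟩
  have hcard : Nat.card (P × B) = Nat.card A :=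
    Nat.card_congr (Equiv.ofBijective G ⟨hGinj, hGsurj⟩)
  have hPcard : Nat.card P = 2 ^ n := by
    rw [Nat.card_coe_set_eq, Set.ncard_coe_finset, Finset.card_powerset, Nat.card_Icc]
    norm_num
  show A.ncard = 2 ^ n * eulA n k
  rw [← Nat.card_coe_set_eq, ← hcard, Nat.card_prod, hPcard, Nat.card_coe_set_eq]
  rfl
end

section
/- For all n ≥ 1 and 0 ≤ k ≤ n, the type B Eulerian number satisfies B(n,k) = Σ_{i=0}^{2k} A(n,i) · C(n+1, 2k−i), where A(n,i) are the type A Eulerian numbers and C denotes binomial coefficients. -/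
open Finset
open scoped Classical

lemma sp_finite (n : ℕ) : {u : ℕ → ℤ | IsSignedPerm n u}.Finite := by
  have h : {u : ℕ → ℤ | IsSignedPerm n u} ⊆
      Set.range (fun (f : (↥(Finset.Icc 1 n) → ↥(Finset.Icc (-(n:ℤ)) n))) =>
        (fun i => if h : i ∈ Finset.Icc 1 n then (f ⟨i, h⟩ : ℤ) else 0)) := by
    intro u hu
    obtain ⟨h1, _, h3⟩ := hu
    refine ⟨fun i => ⟨u i, ?_⟩, ?_⟩
    · have := h1 i i.2
      simp only [Finset.mem_Icc]
      constructor
      · cases abs_cases (u i.1) with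
        | inl h => omega
        | inr h => omega
      · cases abs_cases (u i.1) with
        | inl h => omega
        | inr h => omega
    · funext i
      by_cases hi : i ∈ Finset.Icc 1 n
      · simp [hi]
      · simp [hi, h3 i hi]
  exact (Set.finite_range _).subset h

noncomputable def SPfin (n : ℕ) : Finset (ℕ → ℤ) := (sp_finite n).toFinset

lemma mem_SPfin {n : ℕ} {u : ℕ → ℤ} : u ∈ SPfin n ↔ IsSignedPerm n u := by
  simp [SPfin, Set.Finite.mem_toFinset]

noncomputable def Bfin (n k : ℕ) : Finset (ℕ → ℤ) :=
  (SPfin n).filter (fun u => descB n u = k)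

noncomputable def Pfin (n : ℕ) : Finset (ℕ → ℤ) :=
  (SPfin n).filter (fun u => IsPermWord n u)

noncomputable def Afin (n k : ℕ) : Finset (ℕ → ℤ) :=
  (Pfin n).filter (fun u => descB n u = k)

lemma eulB_eq_card (n k : ℕ) : eulB n k = (Bfin n k).card := by
  rw [eulB, show {u : ℕ → ℤ | IsSignedPerm n u ∧ descB n u = k} = ↑(Bfin n k) by
    ext u; simp [Bfin, mem_SPfin], Set.ncard_coe_finset]

lemma descA_eq_descB {n : ℕ} {w : ℕ → ℤ} (hw : IsPermWord n w) : descA n w = descB n w := by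
  rcases n with _ | m
  · simp [descA, descB]
  · unfold descA descB
    congr 1
    ext i
    simp only [Finset.mem_filter, Finset.mem_Icc, Finset.mem_range]
    constructor
    · rintro ⟨⟨h1, h2⟩, h3⟩; exact ⟨by omega, h3⟩
    · rintro ⟨h1, h2⟩
      refine ⟨⟨?_, by omega⟩, h2⟩
      by_contra h
      have hi : i = 0 := by omega
      subst hi
      have hw0 : w 0 = 0 := hw.1.2.2 0 (by simp)
      have hpos : 0 < w 1 := hw.2 1 (by simp only [Finset.mem_Icc]; omega)
      norm_num [hw0] at h2
      omega

lemma eulA_eq_card (n k : ℕ) : eulA n k = (Afin n k).card := by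
  rw [eulA, show {w : ℕ → ℤ | IsPermWord n w ∧ descA n w = k} = ↑(Afin n k) by
    ext w
    simp only [Afin, Pfin, Finset.coe_filter, Set.mem_setOf_eq, Finset.mem_filter, mem_SPfin]
    constructor
    · rintro ⟨h1, h2⟩; exact ⟨⟨h1.1, h1⟩, by rw [← descA_eq_descB h1]; exact h2⟩
    · rintro ⟨⟨_, h1⟩, h2⟩; exact ⟨h1, by rw [descA_eq_descB h1]; exact h2⟩,
    Set.ncard_coe_finset]

lemma descB_le (n : ℕ) (u : ℕ → ℤ) : descB n u ≤ n := by
  calc ((Finset.range n).filter _).card ≤ (Finset.range n).card := Finset.card_filter_le _ _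
  _ = n := Finset.card_range n

lemma descA_le (n : ℕ) (u : ℕ → ℤ) : descA n u ≤ n - 1 := by
  calc ((Finset.Icc 1 (n-1)).filter _).card ≤ (Finset.Icc 1 (n-1)).card := Finset.card_filter_le _ _
  _ = n - 1 := by rw [Nat.card_Icc]; omega

lemma eulB_vanish {n k : ℕ} (h : n < k) : eulB n k = 0 := by
  rw [eulB]
  have : {u : ℕ → ℤ | IsSignedPerm n u ∧ descB n u = k} = ∅ := by
    ext u
    simp only [Set.mem_setOf_eq, Set.mem_empty_iff_false, iff_false, not_and]
    intro _ hd
    have := descB_le n u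
    omega
  simp [this]

lemma eulA_vanish {n k : ℕ} (h1 : 1 ≤ k) (h2 : n ≤ k) : eulA n k = 0 := by
  rw [eulA]
  have : {w : ℕ → ℤ | IsPermWord n w ∧ descA n w = k} = ∅ := by
    ext w
    simp only [Set.mem_setOf_eq, Set.mem_empty_iff_false, iff_false, not_and]
    intro _ hd
    have := descA_le n w
    omega
  simp [this]

def ins (u : ℕ → ℤ) (p : ℕ) (v : ℤ) : ℕ → ℤ :=
  fun i => if i < p then u i else if i = p then v else u (i - 1)

lemma ins_lt {u : ℕ → ℤ} {p : ℕ} {v : ℤ} {i : ℕ} (h : i < p) : ins u p v i = u i := by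
  simp [ins, h]

lemma ins_self {u : ℕ → ℤ} {p : ℕ} {v : ℤ} : ins u p v p = v := by
  simp [ins]

lemma ins_gt {u : ℕ → ℤ} {p : ℕ} {v : ℤ} {i : ℕ} (h : p < i) : ins u p v i = u (i - 1) := by
  have h1 : ¬ i < p := by omega
  have h2 : ¬ i = p := by omega
  simp [ins, h1, h2]

lemma ins_succ {u : ℕ → ℤ} {p : ℕ} {v : ℤ} {i : ℕ} (h : p ≤ i) : ins u p v (i + 1) = u i := by
  rw [ins_gt (by omega), show i + 1 - 1 = i from rfl]

lemma descB_sum (m : ℕ) (w : ℕ → ℤ) :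
    descB m w = ∑ i ∈ Finset.range m, (if w (i + 1) < w i then 1 else 0) := by
  rw [descB, Finset.card_filter]

lemma descB_ins {n p : ℕ} {u : ℕ → ℤ} {v : ℤ} (hp1 : 1 ≤ p) (hp2 : p ≤ n + 1)
    (h0 : u 0 = 0) (hb : ∀ j, 1 ≤ j → j ≤ n → |u j| < |v|) (hv : v ≠ 0) :
    descB (n + 1) (ins u p v) = descB n u +
      (if p = n + 1 then (if v < 0 then 1 else 0) else (if u p < u (p - 1) then 0 else 1)) := by
  have hcmp : ∀ j, j ≤ n → ((0 : ℤ) < v → u j < v) ∧ (v < 0 → v < u j) := by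
    intro j hj
    rcases Nat.eq_zero_or_pos j with hj0 | hj1
    · subst hj0
      rw [h0]
      constructor <;> intro h <;> omega
    · have hbj := hb j hj1 hj
      have h1 := le_abs_self (u j)
      have h2 := neg_abs_le (u j)
      constructor
      · intro h; rw [abs_of_pos h] at hbj; omega
      · intro h; rw [abs_of_neg h] at hbj; omega
  set f : ℕ → ℕ := fun i => if ins u p v (i + 1) < ins u p v i then 1 else 0 with hf
  set g : ℕ → ℕ := fun i => if u (i + 1) < u i then 1 else 0 with hg
  have hprefix : ∀ i, i < p - 1 → f i = g i := by
    intro i hi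
    simp only [hf, hg]
    rw [ins_lt (by omega), ins_lt (by omega)]
  have hnew : descB (n + 1) (ins u p v) =
      (∑ i ∈ Finset.Ico 0 (p - 1), g i) + (if v < u (p - 1) then 1 else 0)
        + ∑ i ∈ Finset.Ico p (n + 1), f i := by
    rw [descB_sum]
    rw [Finset.range_eq_Ico]
    rw [← Finset.sum_Ico_consecutive _ (Nat.zero_le (p - 1)) (by omega : p - 1 ≤ n + 1)]
    rw [Finset.sum_eq_sum_Ico_succ_bot (by omega : p - 1 < n + 1)]
    rw [show p - 1 + 1 = p by omega]
    rw [Finset.sum_congr rfl (fun i hi => hprefix i (Finset.mem_Ico.mp hi).2)]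
    rw [ins_self, ins_lt (by omega : p - 1 < p)]
    ring
  by_cases hpn : p = n + 1
  · subst hpn
    simp only [show n + 1 - 1 = n from rfl] at hnew
    have hite : (if v < u n then (1:ℕ) else 0) = (if v < (0:ℤ) then 1 else 0) := by
      rcases lt_trichotomy v 0 with h | h | h
      · simp [h, (hcmp n le_rfl).2 h]
      · exact absurd h hv
      · have := (hcmp n le_rfl).1 h
        have h1 : ¬ v < u n := by omega
        have h2 : ¬ v < (0:ℤ) := by omega
        simp [h1, h2]
    rw [hnew, hite, Finset.Ico_self, Finset.sum_empty, if_pos rfl,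
      descB_sum, Finset.range_eq_Ico]
    ring
  · -- p ≤ n
    have hpn' : p ≤ n := by omega
    have hsuffix : ∑ i ∈ Finset.Ico p (n + 1), f i
        = f p + ∑ i ∈ Finset.Ico p n, g i := by
      rw [Finset.sum_eq_sum_Ico_succ_bot (by omega : p < n + 1)]
      congr 1
      rw [Finset.sum_Ico_eq_sum_range, Finset.sum_Ico_eq_sum_range,
        show n + 1 - (p + 1) = n - p by omega]
      apply Finset.sum_congr rfl
      intro i _
      simp only [hf, hg]
      have e1 : ins u p v (p + 1 + i + 1) = u (p + i + 1) := by
        rw [ins_succ (by omega)]; congr 1; omega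
      have e2 : ins u p v (p + 1 + i) = u (p + i) := by
        rw [show p + 1 + i = (p + i) + 1 by omega, ins_succ (by omega)]
      rw [e1, e2]
    have hfp : f p = if u p < v then 1 else 0 := by
      simp only [hf]
      rw [ins_succ le_rfl, ins_self]
    have hold : descB n u =
        (∑ i ∈ Finset.Ico 0 (p - 1), g i) + (if u p < u (p - 1) then 1 else 0)
          + ∑ i ∈ Finset.Ico p n, g i := by
      rw [descB_sum, Finset.range_eq_Ico]
      rw [← Finset.sum_Ico_consecutive _ (Nat.zero_le (p - 1)) (by omega : p - 1 ≤ n)]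
      rw [Finset.sum_eq_sum_Ico_succ_bot (by omega : p - 1 < n)]
      rw [show p - 1 + 1 = p by omega]
      ring
    have hone : (if v < u (p - 1) then 1 else 0) + (if u p < v then 1 else 0) = 1 := by
      rcases lt_trichotomy v 0 with h | h | h
      · have h1 := (hcmp (p - 1) (by omega)).2 h
        have h2 := (hcmp p (by omega)).1
        have h3 : ¬ u p < v := by
          have := (hcmp p (by omega)).2 h; omega
        simp [h1, h3]
      · exact absurd h hv
      · have h1 := (hcmp p (by omega)).1 h
        have h2 : ¬ v < u (p - 1) := by
          have := (hcmp (p - 1) (by omega)).1 h; omega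
        simp [h1, h2]
    rw [hnew, hsuffix, hfp, hold, if_neg hpn]
    by_cases hd : u p < u (p - 1) <;> simp [hd] <;> omega

def del (u : ℕ → ℤ) (p : ℕ) : ℕ → ℤ := fun i => if i < p then u i else u (i + 1)

lemma sp_zero {n : ℕ} {u : ℕ → ℤ} (h : IsSignedPerm n u) : u 0 = 0 :=
  h.2.2 0 (by simp)

lemma ins_isSignedPerm {n p : ℕ} {u : ℕ → ℤ} {v : ℤ} (hu : IsSignedPerm n u)
    (hp1 : 1 ≤ p) (hp2 : p ≤ n + 1) (hv : |v| = (n : ℤ) + 1) :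
    IsSignedPerm (n + 1) (ins u p v) := by
  obtain ⟨h1, h2, h3⟩ := hu
  have hval : ∀ i, i ∈ Finset.Icc 1 (n + 1) → i ≠ p →
      ∃ j, j ∈ Finset.Icc 1 n ∧ ins u p v i = u j ∧
        (j = if i < p then i else i - 1) := by
    intro i hi hip
    simp only [Finset.mem_Icc] at hi
    by_cases h : i < p
    · exact ⟨i, by simp only [Finset.mem_Icc]; omega, ins_lt h, by simp [h]⟩
    · refine ⟨i - 1, by simp only [Finset.mem_Icc]; omega, ins_gt (by omega), by simp [h]⟩
  refine ⟨?_, ?_, ?_⟩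
  · intro i hi
    by_cases hip : i = p
    · subst hip; rw [ins_self, hv]; constructor <;> push_cast <;> omega
    · obtain ⟨j, hj, hej, _⟩ := hval i hi hip
      rw [hej]
      have := h1 j hj
      constructor
      · exact this.1
      · calc |u j| ≤ (n : ℤ) := this.2
          _ ≤ (n : ℤ) + 1 := by omega
  · intro i hi j hj habs
    by_cases hip : i = p <;> by_cases hjp : j = p
    · omega
    · exfalso
      obtain ⟨b, hb, heb, _⟩ := hval j hj hjp
      rw [hip] at habs
      rw [ins_self, heb, hv] at habs
      have := (h1 b hb).2
      omega
    · exfalso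
      obtain ⟨a, ha, hea, _⟩ := hval i hi hip
      rw [hjp] at habs
      rw [ins_self, hea, hv] at habs
      have := (h1 a ha).2
      omega
    · obtain ⟨a, ha, hea, hia⟩ := hval i hi hip
      obtain ⟨b, hb, heb, hjb⟩ := hval j hj hjp
      rw [hea, heb] at habs
      have hab : a = b := h2 a ha b hb habs
      simp only [Finset.mem_Icc] at hi hj
      by_cases h : i < p <;> by_cases h' : j < p <;>
        simp [h, h'] at hia hjb <;> omega
  · intro i hi
    simp only [Finset.mem_Icc] at hi
    have hi0 : i = 0 ∨ n + 1 < i := by omega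
    rcases hi0 with hi0 | hi0
    · subst hi0
      rw [ins_lt (by omega)]
      exact h3 0 (by simp)
    · rw [ins_gt (by omega)]
      exact h3 (i - 1) (by simp only [Finset.mem_Icc]; omega)

lemma del_isSignedPerm {n p : ℕ} {u : ℕ → ℤ} (hu : IsSignedPerm (n + 1) u)
    (hp1 : 1 ≤ p) (hp2 : p ≤ n + 1) (hv : |u p| = (n : ℤ) + 1) :
    IsSignedPerm n (del u p) := by
  obtain ⟨h1, h2, h3⟩ := hu
  have hval : ∀ i, i ∈ Finset.Icc 1 n →
      ∃ j, j ∈ Finset.Icc 1 (n + 1) ∧ j ≠ p ∧ del u p i = u j ∧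
        (j = if i < p then i else i + 1) := by
    intro i hi
    simp only [Finset.mem_Icc] at hi
    by_cases h : i < p
    · exact ⟨i, by simp only [Finset.mem_Icc]; omega, by omega, by simp [del, h], by simp [h]⟩
    · exact ⟨i + 1, by simp only [Finset.mem_Icc]; omega, by omega, by simp [del, h], by simp [h]⟩
  refine ⟨?_, ?_, ?_⟩
  · intro i hi
    obtain ⟨j, hj, hjp, hej, _⟩ := hval i hi
    rw [hej]
    refine ⟨(h1 j hj).1, ?_⟩
    have hb := (h1 j hj).2
    by_contra hlt
    push_neg at hlt
    have : |u j| = (n : ℤ) + 1 := by omega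
    exact hjp (h2 j hj p (by simp only [Finset.mem_Icc]; omega) (by rw [this, hv]))
  · intro i hi j hj habs
    obtain ⟨a, ha, hap, hea, hia⟩ := hval i hi
    obtain ⟨b, hb, hbp, heb, hjb⟩ := hval j hj
    rw [hea, heb] at habs
    have hab : a = b := h2 a ha b hb habs
    simp only [Finset.mem_Icc] at hi hj
    by_cases h : i < p <;> by_cases h' : j < p <;>
      simp [h, h'] at hia hjb <;> omega
  · intro i hi
    simp only [Finset.mem_Icc] at hi
    have hi0 : i = 0 ∨ n < i := by omega
    rcases hi0 with hi0 | hi0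
    · subst hi0
      simp only [del, if_pos (by omega : 0 < p)]
      exact h3 0 (by simp)
    · by_cases h : i < p
      · simp only [del, if_pos h]
        exact h3 i (by simp only [Finset.mem_Icc]; omega)
      · simp only [del, if_neg h]
        exact h3 (i + 1) (by simp only [Finset.mem_Icc]; omega)

lemma ins_del {u : ℕ → ℤ} {p : ℕ} (hp : 1 ≤ p) : ins (del u p) p (u p) = u := by
  funext i
  by_cases h : i < p
  · rw [ins_lt h]; simp [del, h]
  · by_cases h' : i = p
    · subst h'; rw [ins_self]
    · rw [ins_gt (by omega)]
      simp only [del, if_neg (show ¬ i - 1 < p by omega)]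
      congr 1
      omega

lemma del_ins {u : ℕ → ℤ} {p : ℕ} {v : ℤ} : del (ins u p v) p = u := by
  funext i
  by_cases h : i < p
  · simp only [del, if_pos h]; exact ins_lt h
  · simp only [del, if_neg h]; exact ins_succ (by omega)

lemma exists_pos {n : ℕ} {u : ℕ → ℤ} (hu : IsSignedPerm (n + 1) u) :
    ∃ p, p ∈ Finset.Icc 1 (n + 1) ∧ |u p| = (n : ℤ) + 1 := by
  obtain ⟨h1, h2, h3⟩ := hu
  have hsurj := Finset.surj_on_of_inj_on_of_card_le
    (s := Finset.Icc 1 (n + 1)) (t := Finset.Icc 1 (n + 1))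
    (fun i _ => (u i).natAbs)
    (fun i hi => by
      have := h1 i hi
      simp only [Finset.mem_Icc]
      constructor
      · have : (1:ℤ) ≤ |u i| := this.1
        rw [Int.abs_eq_natAbs] at this
        exact_mod_cast this
      · have : |u i| ≤ ((n : ℤ) + 1) := by
          have := this.2; push_cast; omega
        rw [Int.abs_eq_natAbs] at this
        exact_mod_cast this)
    (fun a₁ a₂ ha₁ ha₂ heq => h2 a₁ ha₁ a₂ ha₂ (by
      rw [Int.abs_eq_natAbs, Int.abs_eq_natAbs]
      exact_mod_cast heq))
    le_rfl
  obtain ⟨p, hp, hep⟩ := hsurj (n + 1) (by simp only [Finset.mem_Icc]; omega)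
  refine ⟨p, hp, ?_⟩
  rw [Int.abs_eq_natAbs, ← hep]
  push_cast
  ring

lemma Dcard {n : ℕ} (u : ℕ → ℤ) :
    ((Finset.Icc 1 n).filter (fun p => u p < u (p - 1))).card = descB n u := by
  rw [descB]
  apply Finset.card_bij (fun p _ => p - 1)
  · intro a ha
    simp only [Finset.mem_filter, Finset.mem_Icc] at ha
    simp only [Finset.mem_filter, Finset.mem_range]
    constructor
    · omega
    · rw [show a - 1 + 1 = a by omega]
      exact ha.2
  · intro a ha b hb hab
    simp only [Finset.mem_filter, Finset.mem_Icc] at ha hb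
    omega
  · intro b hb
    simp only [Finset.mem_filter, Finset.mem_range] at hb
    refine ⟨b + 1, ?_, by omega⟩
    simp only [Finset.mem_filter, Finset.mem_Icc]
    refine ⟨⟨by omega, by omega⟩, ?_⟩
    rw [show b + 1 - 1 = b by omega]
    exact hb.2

lemma descB_ins_sp {n p : ℕ} {u : ℕ → ℤ} {v : ℤ} (hu : IsSignedPerm n u)
    (hp1 : 1 ≤ p) (hp2 : p ≤ n + 1) (hv : |v| = (n : ℤ) + 1) :
    descB (n + 1) (ins u p v) = descB n u +
      (if p = n + 1 then (if v < 0 then 1 else 0) else (if u p < u (p - 1) then 0 else 1)) := by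
  apply descB_ins hp1 hp2 (sp_zero hu)
  · intro j hj1 hj2
    have := (hu.1 j (by simp only [Finset.mem_Icc]; omega)).2
    rw [hv]; omega
  · intro hv0
    rw [hv0] at hv
    simp at hv
    omega

lemma slots_count {n K : ℕ} {u : ℕ → ℤ} (hu : IsSignedPerm n u) :
    ((Finset.Icc 1 (n + 1) ×ˢ ({((n : ℤ) + 1), -((n : ℤ) + 1)} : Finset ℤ)).filter
      (fun s => descB (n + 1) (ins u s.1 s.2) = K)).card
    = (if descB n u = K then 2 * K + 1 else 0)
      + (if descB n u + 1 = K then 2 * n + 1 - 2 * descB n u else 0) := by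
  have hvmem : ∀ v : ℤ, v ∈ ({((n : ℤ) + 1), -((n : ℤ) + 1)} : Finset ℤ) → |v| = (n : ℤ) + 1 := by
    intro v hv
    simp only [Finset.mem_insert, Finset.mem_singleton] at hv
    rcases hv with h | h <;> subst h
    · rw [abs_of_pos (by positivity)]
    · rw [abs_of_neg (by omega), neg_neg]
  set D : ℕ × ℤ → ℕ := fun s =>
    (if s.1 = n + 1 then (if s.2 < 0 then 1 else 0) else (if u s.1 < u (s.1 - 1) then 0 else 1))
    with hD
  have hfc : (Finset.Icc 1 (n + 1) ×ˢ ({((n : ℤ) + 1), -((n : ℤ) + 1)} : Finset ℤ)).filter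
      (fun s => descB (n + 1) (ins u s.1 s.2) = K)
      = (Finset.Icc 1 (n + 1) ×ˢ ({((n : ℤ) + 1), -((n : ℤ) + 1)} : Finset ℤ)).filter
      (fun s => descB n u + D s = K) := by
    apply Finset.filter_congr
    intro s hs
    simp only [Finset.mem_product, Finset.mem_Icc] at hs
    rw [descB_ins_sp hu hs.1.1 hs.1.2 (hvmem s.2 hs.2)]
  rw [hfc]
  have hcard0 : ((Finset.Icc 1 (n + 1) ×ˢ ({((n : ℤ) + 1), -((n : ℤ) + 1)} : Finset ℤ)).filter
      (fun s => D s = 0)).card = 2 * descB n u + 1 := by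
    have hset : (Finset.Icc 1 (n + 1) ×ˢ ({((n : ℤ) + 1), -((n : ℤ) + 1)} : Finset ℤ)).filter
        (fun s => D s = 0)
        = insert ((n + 1 : ℕ), ((n : ℤ) + 1))
          (((Finset.Icc 1 n).filter (fun p => u p < u (p - 1)))
            ×ˢ ({((n : ℤ) + 1), -((n : ℤ) + 1)} : Finset ℤ)) := by
      ext ⟨p, v⟩
      simp only [Finset.mem_filter, Finset.mem_product, Finset.mem_Icc, Finset.mem_insert,
        Finset.mem_singleton, hD, Prod.mk.injEq]
      constructor
      · rintro ⟨⟨⟨hp1, hp2⟩, hv⟩, hD0⟩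
        by_cases hpn : p = n + 1
        · left
          refine ⟨hpn, ?_⟩
          rw [if_pos hpn] at hD0
          rcases hv with h | h
          · exact h
          · exfalso
            rw [if_pos (by rw [h]; omega)] at hD0
            omega
        · right
          rw [if_neg hpn] at hD0
          have hd : u p < u (p - 1) := by
            by_contra hnd
            rw [if_neg hnd] at hD0
            omega
          exact ⟨⟨⟨hp1, by omega⟩, hd⟩, hv⟩
      · rintro (⟨hp, hv⟩ | ⟨⟨⟨hp1, hp2⟩, hd⟩, hv⟩)
        · subst hp
          refine ⟨⟨⟨by omega, le_rfl⟩, Or.inl hv⟩, ?_⟩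
          rw [if_pos rfl, if_neg (by rw [hv]; omega)]
        · have hpn : p ≠ n + 1 := by omega
          exact ⟨⟨⟨hp1, by omega⟩, hv⟩, by rw [if_neg hpn, if_pos hd]⟩
    rw [hset, Finset.card_insert_of_notMem, Finset.card_product]
    · rw [Dcard u, Finset.card_insert_of_notMem (by simp; omega), Finset.card_singleton]
      ring
    · simp only [Finset.mem_product, Finset.mem_filter, Finset.mem_Icc]
      push_neg
      intro h
      omega
  have hDval : ∀ s, D s = 0 ∨ D s = 1 := by
    intro s
    simp only [hD]
    split_ifs <;> omega
  have htot : ((Finset.Icc 1 (n + 1)) ×ˢ ({((n : ℤ) + 1), -((n : ℤ) + 1)} : Finset ℤ)).card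
      = 2 * n + 2 := by
    rw [Finset.card_product, Finset.card_insert_of_notMem (by simp; omega),
      Finset.card_singleton, Nat.card_Icc]
    omega
  have hk := descB_le n u
  rcases Nat.lt_trichotomy (descB n u) K with hlt | heq | hgt
  · by_cases hK : descB n u + 1 = K
    · have : (Finset.Icc 1 (n + 1) ×ˢ ({((n : ℤ) + 1), -((n : ℤ) + 1)} : Finset ℤ)).filter
          (fun s => descB n u + D s = K)
          = (Finset.Icc 1 (n + 1) ×ˢ ({((n : ℤ) + 1), -((n : ℤ) + 1)} : Finset ℤ)).filter
          (fun s => ¬ (D s = 0)) := by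
        apply Finset.filter_congr
        intro s _
        rcases hDval s with h | h <;> simp [h] <;> omega
      rw [this]
      have hcompl := Finset.card_filter_add_card_filter_not
        (s := (Finset.Icc 1 (n + 1)) ×ˢ ({((n : ℤ) + 1), -((n : ℤ) + 1)} : Finset ℤ))
        (p := fun s => D s = 0)
      rw [htot, hcard0] at hcompl
      rw [if_neg (by omega), if_pos hK]
      omega
    · have : (Finset.Icc 1 (n + 1) ×ˢ ({((n : ℤ) + 1), -((n : ℤ) + 1)} : Finset ℤ)).filter
          (fun s => descB n u + D s = K) = ∅ := by
        apply Finset.filter_false_of_mem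
        intro s _
        rcases hDval s with h | h <;> omega
      rw [this]
      simp only [Finset.card_empty]
      rw [if_neg (by omega), if_neg hK]
  · have : (Finset.Icc 1 (n + 1) ×ˢ ({((n : ℤ) + 1), -((n : ℤ) + 1)} : Finset ℤ)).filter
        (fun s => descB n u + D s = K)
        = (Finset.Icc 1 (n + 1) ×ˢ ({((n : ℤ) + 1), -((n : ℤ) + 1)} : Finset ℤ)).filter
        (fun s => D s = 0) := by
      apply Finset.filter_congr
      intro s _
      rcases hDval s with h | h <;> simp [h] <;> omega
    rw [this, hcard0, if_pos heq, if_neg (by omega)]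
    omega
  · have : (Finset.Icc 1 (n + 1) ×ˢ ({((n : ℤ) + 1), -((n : ℤ) + 1)} : Finset ℤ)).filter
        (fun s => descB n u + D s = K) = ∅ := by
      apply Finset.filter_false_of_mem
      intro s _
      rcases hDval s with h | h <;> omega
    rw [this]
    simp only [Finset.card_empty]
    rw [if_neg (by omega), if_neg (by omega)]

lemma vmem_abs {n : ℕ} {v : ℤ} (hv : v ∈ ({((n : ℤ) + 1), -((n : ℤ) + 1)} : Finset ℤ)) :
    |v| = (n : ℤ) + 1 := by
  simp only [Finset.mem_insert, Finset.mem_singleton] at hv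
  rcases hv with h | h <;> subst h
  · rw [abs_of_pos (by positivity)]
  · rw [abs_of_neg (by omega), neg_neg]

lemma ins_ne_pos {n p q : ℕ} {u : ℕ → ℤ} {v : ℤ} (hu : IsSignedPerm n u)
    (hp1 : 1 ≤ p) (hp2 : p ≤ n + 1) (hq1 : 1 ≤ q) (hq2 : q ≤ n + 1) (hqp : q ≠ p) :
    |ins u p v q| ≤ (n : ℤ) := by
  by_cases h : q < p
  · rw [ins_lt h]
    exact (hu.1 q (by simp only [Finset.mem_Icc]; omega)).2
  · rw [ins_gt (by omega)]
    exact (hu.1 (q - 1) (by simp only [Finset.mem_Icc]; omega)).2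

lemma Bcard (n K : ℕ) :
    eulB (n + 1) K = ∑ u ∈ SPfin n,
      ((Finset.Icc 1 (n + 1) ×ˢ ({((n : ℤ) + 1), -((n : ℤ) + 1)} : Finset ℤ)).filter
        (fun s => descB (n + 1) (ins u s.1 s.2) = K)).card := by
  rw [eulB_eq_card, ← Finset.card_sigma]
  symm
  apply Finset.card_bij (fun (x : Σ _ : ℕ → ℤ, ℕ × ℤ) _ => ins x.1 x.2.1 x.2.2)
  · rintro ⟨u, p, v⟩ hx
    simp only [Finset.mem_sigma, Finset.mem_filter, Finset.mem_product, Finset.mem_Icc,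
      mem_SPfin] at hx
    obtain ⟨hu, ⟨⟨hp1, hp2⟩, hv⟩, hd⟩ := hx
    simp only [Bfin, Finset.mem_filter, mem_SPfin]
    exact ⟨ins_isSignedPerm hu hp1 hp2 (vmem_abs hv), hd⟩
  · rintro ⟨u1, p1, v1⟩ hx1 ⟨u2, p2, v2⟩ hx2 heq
    simp only [Finset.mem_sigma, Finset.mem_filter, Finset.mem_product, Finset.mem_Icc,
      mem_SPfin] at hx1 hx2
    obtain ⟨hu1, ⟨⟨hp11, hp12⟩, hv1⟩, _⟩ := hx1
    obtain ⟨hu2, ⟨⟨hp21, hp22⟩, hv2⟩, _⟩ := hx2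
    simp only at heq
    have hpp : p1 = p2 := by
      by_contra hne
      have e1 : ins u1 p1 v1 p1 = v1 := ins_self
      have e2 := ins_ne_pos hu2 hp21 hp22 hp11 hp12 hne (v := v2)
      rw [← heq, e1, vmem_abs hv1] at e2
      omega
    subst hpp
    have hvv : v1 = v2 := by
      have e1 : ins u1 p1 v1 p1 = v1 := ins_self
      have e2 : ins u2 p1 v2 p1 = v2 := ins_self
      rw [← e1, heq, e2]
    subst hvv
    have huu : u1 = u2 := by
      have := congrArg (fun w => del w p1) heq
      simpa only [del_ins] using this
    subst huu
    rfl
  · intro b hb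
    simp only [Bfin, Finset.mem_filter, mem_SPfin] at hb
    obtain ⟨hbsp, hbd⟩ := hb
    obtain ⟨p, hp, habs⟩ := exists_pos hbsp
    simp only [Finset.mem_Icc] at hp
    refine ⟨⟨del b p, p, b p⟩, ?_, ?_⟩
    · simp only [Finset.mem_sigma, Finset.mem_filter, Finset.mem_product, Finset.mem_Icc,
        mem_SPfin]
      push_cast at habs
      refine ⟨del_isSignedPerm hbsp hp.1 hp.2 (by push_cast; exact habs), ⟨⟨hp.1, hp.2⟩, ?_⟩, ?_⟩
      · rcases abs_eq (by positivity : (0:ℤ) ≤ (n:ℤ) + 1) |>.mp habs with h | h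
        · simp [h]
        · simp [h]
      · rw [ins_del hp.1]
        exact hbd
    · simp only
      rw [ins_del hp.1]

lemma eulB_rec0 (n : ℕ) : eulB (n + 1) 0 = eulB n 0 := by
  rw [Bcard n 0, eulB_eq_card]
  rw [Finset.sum_congr rfl (fun u hu => slots_count (K := 0) (mem_SPfin.mp hu))]
  have : ∀ u ∈ SPfin n,
      ((if descB n u = 0 then 2 * 0 + 1 else 0)
        + (if descB n u + 1 = 0 then 2 * n + 1 - 2 * descB n u else 0))
      = (if descB n u = 0 then 1 else 0) := by
    intro u _
    by_cases h : descB n u = 0 <;> simp [h]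
  rw [Finset.sum_congr rfl this, ← Finset.card_filter]
  rfl

lemma eulB_recS (n k : ℕ) :
    eulB (n + 1) (k + 1) = (2 * k + 3) * eulB n (k + 1) + (2 * n + 1 - 2 * k) * eulB n k := by
  rw [Bcard n (k + 1), eulB_eq_card, eulB_eq_card]
  rw [Finset.sum_congr rfl (fun u hu => slots_count (K := k + 1) (mem_SPfin.mp hu))]
  have : ∀ u ∈ SPfin n,
      ((if descB n u = k + 1 then 2 * (k + 1) + 1 else 0)
        + (if descB n u + 1 = k + 1 then 2 * n + 1 - 2 * descB n u else 0))
      = (if descB n u = k + 1 then 2 * k + 3 else 0)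
        + (if descB n u = k then 2 * n + 1 - 2 * k else 0) := by
    intro u _
    by_cases h1 : descB n u = k + 1 <;> by_cases h2 : descB n u = k
    · omega
    · simp only [if_pos h1, if_neg h2, if_neg (show ¬ descB n u + 1 = k + 1 by omega)]
      omega
    · simp only [if_neg h1, if_pos h2, if_pos (show descB n u + 1 = k + 1 by omega), h2]
      simp
    · simp only [if_neg h1, if_neg h2, if_neg (show ¬ descB n u + 1 = k + 1 by omega)]
  rw [Finset.sum_congr rfl this, Finset.sum_add_distrib]
  congr 1
  · rw [← Finset.sum_filter, Finset.sum_const, smul_eq_mul]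
    rw [mul_comm]
    rfl
  · rw [← Finset.sum_filter, Finset.sum_const, smul_eq_mul]
    rw [mul_comm]
    rfl

lemma mem_Pfin {n : ℕ} {u : ℕ → ℤ} : u ∈ Pfin n ↔ IsPermWord n u := by
  simp only [Pfin, Finset.mem_filter, mem_SPfin]
  exact ⟨fun h => h.2, fun h => ⟨h.1, h⟩⟩

lemma ins_isPermWord {n p : ℕ} {u : ℕ → ℤ} (hu : IsPermWord n u)
    (hp1 : 1 ≤ p) (hp2 : p ≤ n + 1) :
    IsPermWord (n + 1) (ins u p ((n : ℤ) + 1)) := by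
  refine ⟨ins_isSignedPerm hu.1 hp1 hp2 (by rw [abs_of_pos (by positivity)]), ?_⟩
  intro i hi
  simp only [Finset.mem_Icc] at hi
  by_cases h : i < p
  · rw [ins_lt h]
    exact hu.2 i (by simp only [Finset.mem_Icc]; omega)
  · by_cases h' : i = p
    · subst h'; rw [ins_self]; positivity
    · rw [ins_gt (by omega)]
      exact hu.2 (i - 1) (by simp only [Finset.mem_Icc]; omega)

lemma del_isPermWord {n p : ℕ} {u : ℕ → ℤ} (hu : IsPermWord (n + 1) u)
    (hp1 : 1 ≤ p) (hp2 : p ≤ n + 1) (hv : |u p| = (n : ℤ) + 1) :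
    IsPermWord n (del u p) := by
  refine ⟨del_isSignedPerm hu.1 hp1 hp2 hv, ?_⟩
  intro i hi
  simp only [Finset.mem_Icc] at hi
  by_cases h : i < p
  · simp only [del, if_pos h]
    exact hu.2 i (by simp only [Finset.mem_Icc]; omega)
  · simp only [del, if_neg h]
    exact hu.2 (i + 1) (by simp only [Finset.mem_Icc]; omega)

lemma slotsA_count {n K : ℕ} {u : ℕ → ℤ} (hu : IsSignedPerm n u) :
    ((Finset.Icc 1 (n + 1)).filter
      (fun p => descB (n + 1) (ins u p ((n : ℤ) + 1)) = K)).card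
    = (if descB n u = K then K + 1 else 0)
      + (if descB n u + 1 = K then n - descB n u else 0) := by
  have habs : |((n : ℤ) + 1)| = (n : ℤ) + 1 := by rw [abs_of_pos (by positivity)]
  set D : ℕ → ℕ := fun p =>
    (if p = n + 1 then 0 else (if u p < u (p - 1) then 0 else 1)) with hD
  have hfc : (Finset.Icc 1 (n + 1)).filter
      (fun p => descB (n + 1) (ins u p ((n : ℤ) + 1)) = K)
      = (Finset.Icc 1 (n + 1)).filter (fun p => descB n u + D p = K) := by
    apply Finset.filter_congr
    intro p hp
    simp only [Finset.mem_Icc] at hp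
    rw [descB_ins_sp hu hp.1 hp.2 habs]
    simp only [hD]
    rw [if_neg (by omega : ¬ ((n : ℤ) + 1) < 0)]
  rw [hfc]
  have hcard0 : ((Finset.Icc 1 (n + 1)).filter (fun p => D p = 0)).card = descB n u + 1 := by
    have hset : (Finset.Icc 1 (n + 1)).filter (fun p => D p = 0)
        = insert (n + 1) ((Finset.Icc 1 n).filter (fun p => u p < u (p - 1))) := by
      ext p
      simp only [Finset.mem_filter, Finset.mem_Icc, Finset.mem_insert, hD]
      constructor
      · rintro ⟨⟨hp1, hp2⟩, hD0⟩
        by_cases hpn : p = n + 1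
        · exact Or.inl hpn
        · right
          rw [if_neg hpn] at hD0
          refine ⟨⟨hp1, by omega⟩, ?_⟩
          by_contra hnd
          rw [if_neg hnd] at hD0
          omega
      · rintro (hp | ⟨⟨hp1, hp2⟩, hd⟩)
        · subst hp
          exact ⟨⟨by omega, le_rfl⟩, by rw [if_pos rfl]⟩
        · exact ⟨⟨hp1, by omega⟩, by rw [if_neg (by omega), if_pos hd]⟩
    have hnot : (n + 1) ∉ (Finset.Icc 1 n).filter (fun p => u p < u (p - 1)) := by
      simp only [Finset.mem_filter, Finset.mem_Icc]
      intro hmem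
      exact absurd hmem.1.2 (by omega)
    rw [hset, Finset.card_insert_of_notMem hnot, Dcard u]
  have hDval : ∀ p, D p = 0 ∨ D p = 1 := by
    intro p
    simp only [hD]
    split_ifs <;> omega
  have htot : (Finset.Icc 1 (n + 1)).card = n + 1 := by rw [Nat.card_Icc]; omega
  have hk := descB_le n u
  rcases Nat.lt_trichotomy (descB n u) K with hlt | heq | hgt
  · by_cases hK : descB n u + 1 = K
    · have : (Finset.Icc 1 (n + 1)).filter (fun p => descB n u + D p = K)
          = (Finset.Icc 1 (n + 1)).filter (fun p => ¬ (D p = 0)) := by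
        apply Finset.filter_congr
        intro p _
        rcases hDval p with h | h <;> simp [h] <;> omega
      rw [this]
      have hcompl := Finset.card_filter_add_card_filter_not
        (s := Finset.Icc 1 (n + 1)) (p := fun p => D p = 0)
      rw [htot, hcard0] at hcompl
      rw [if_neg (by omega), if_pos hK]
      omega
    · have : (Finset.Icc 1 (n + 1)).filter (fun p => descB n u + D p = K) = ∅ := by
        apply Finset.filter_false_of_mem
        intro p _
        rcases hDval p with h | h <;> omega
      rw [this]
      simp only [Finset.card_empty]
      rw [if_neg (by omega), if_neg hK]
  · have : (Finset.Icc 1 (n + 1)).filter (fun p => descB n u + D p = K)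
        = (Finset.Icc 1 (n + 1)).filter (fun p => D p = 0) := by
      apply Finset.filter_congr
      intro p _
      rcases hDval p with h | h <;> simp [h] <;> omega
    rw [this, hcard0, if_pos heq, if_neg (by omega)]
    omega
  · have : (Finset.Icc 1 (n + 1)).filter (fun p => descB n u + D p = K) = ∅ := by
      apply Finset.filter_false_of_mem
      intro p _
      rcases hDval p with h | h <;> omega
    rw [this]
    simp only [Finset.card_empty]
    rw [if_neg (by omega), if_neg (by omega)]

lemma Acard (n K : ℕ) :
    eulA (n + 1) K = ∑ u ∈ Pfin n,
      ((Finset.Icc 1 (n + 1)).filter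
        (fun p => descB (n + 1) (ins u p ((n : ℤ) + 1)) = K)).card := by
  rw [eulA_eq_card, ← Finset.card_sigma]
  symm
  apply Finset.card_bij (fun (x : Σ _ : ℕ → ℤ, ℕ) _ => ins x.1 x.2 ((n : ℤ) + 1))
  · rintro ⟨u, p⟩ hx
    simp only [Finset.mem_sigma, Finset.mem_filter, Finset.mem_Icc, mem_Pfin] at hx
    obtain ⟨hu, ⟨hp1, hp2⟩, hd⟩ := hx
    simp only [Afin, Finset.mem_filter, mem_Pfin]
    exact ⟨ins_isPermWord hu hp1 hp2, hd⟩
  · rintro ⟨u1, p1⟩ hx1 ⟨u2, p2⟩ hx2 heq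
    simp only [Finset.mem_sigma, Finset.mem_filter, Finset.mem_Icc, mem_Pfin] at hx1 hx2
    obtain ⟨hu1, ⟨hp11, hp12⟩, _⟩ := hx1
    obtain ⟨hu2, ⟨hp21, hp22⟩, _⟩ := hx2
    simp only at heq
    have hpp : p1 = p2 := by
      by_contra hne
      have e1 : ins u1 p1 ((n : ℤ) + 1) p1 = (n : ℤ) + 1 := ins_self
      have e2 := ins_ne_pos hu2.1 hp21 hp22 hp11 hp12 hne (v := ((n : ℤ) + 1))
      rw [← heq, e1] at e2
      rw [abs_of_pos (by positivity)] at e2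
      omega
    subst hpp
    have huu : u1 = u2 := by
      have := congrArg (fun w => del w p1) heq
      simpa only [del_ins] using this
    subst huu
    rfl
  · intro b hb
    simp only [Afin, Finset.mem_filter, mem_Pfin] at hb
    obtain ⟨hbpw, hbd⟩ := hb
    obtain ⟨p, hp, habs⟩ := exists_pos hbpw.1
    simp only [Finset.mem_Icc] at hp
    have hbp : b p = (n : ℤ) + 1 := by
      have hpos := hbpw.2 p (by simp only [Finset.mem_Icc]; omega)
      rw [abs_of_pos hpos] at habs
      push_cast at habs ⊢
      omega
    refine ⟨⟨del b p, p⟩, ?_, ?_⟩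
    · simp only [Finset.mem_sigma, Finset.mem_filter, Finset.mem_Icc, mem_Pfin]
      refine ⟨del_isPermWord hbpw hp.1 hp.2 habs, ⟨hp.1, hp.2⟩, ?_⟩
      rw [← hbp, ins_del hp.1]
      exact hbd
    · simp only
      rw [← hbp, ins_del hp.1]

lemma eulA_rec0 (n : ℕ) : eulA (n + 1) 0 = eulA n 0 := by
  rw [Acard n 0, eulA_eq_card]
  rw [Finset.sum_congr rfl (fun u hu => slotsA_count (K := 0) (mem_Pfin.mp hu).1)]
  have : ∀ u ∈ Pfin n,
      ((if descB n u = 0 then 0 + 1 else 0)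
        + (if descB n u + 1 = 0 then n - descB n u else 0))
      = (if descB n u = 0 then 1 else 0) := by
    intro u _
    by_cases h : descB n u = 0 <;> simp [h]
  rw [Finset.sum_congr rfl this, ← Finset.card_filter]
  rfl

lemma eulA_recS (n k : ℕ) :
    eulA (n + 1) (k + 1) = (k + 2) * eulA n (k + 1) + (n - k) * eulA n k := by
  rw [Acard n (k + 1), eulA_eq_card, eulA_eq_card]
  rw [Finset.sum_congr rfl (fun u hu => slotsA_count (K := k + 1) (mem_Pfin.mp hu).1)]
  have : ∀ u ∈ Pfin n,
      ((if descB n u = k + 1 then (k + 1) + 1 else 0)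
        + (if descB n u + 1 = k + 1 then n - descB n u else 0))
      = (if descB n u = k + 1 then k + 2 else 0)
        + (if descB n u = k then n - k else 0) := by
    intro u _
    by_cases h1 : descB n u = k + 1 <;> by_cases h2 : descB n u = k
    · omega
    · simp only [if_pos h1, if_neg h2, if_neg (show ¬ descB n u + 1 = k + 1 by omega)]
    · simp only [if_neg h1, if_pos h2, if_pos (show descB n u + 1 = k + 1 by omega), h2]
    · simp only [if_neg h1, if_neg h2, if_neg (show ¬ descB n u + 1 = k + 1 by omega)]
  rw [Finset.sum_congr rfl this, Finset.sum_add_distrib]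
  congr 1
  · rw [← Finset.sum_filter, Finset.sum_const, smul_eq_mul]
    rw [mul_comm]
    rfl
  · rw [← Finset.sum_filter, Finset.sum_const, smul_eq_mul]
    rw [mul_comm]
    rfl

lemma eulB_zero_zero : eulB 0 0 = 1 := by
  rw [eulB]
  have : {u : ℕ → ℤ | IsSignedPerm 0 u ∧ descB 0 u = 0} = {fun _ => 0} := by
    ext u
    simp only [Set.mem_setOf_eq, Set.mem_singleton_iff]
    constructor
    · rintro ⟨⟨_, _, h3⟩, _⟩
      funext i
      exact h3 i (by simp)
    · rintro rfl
      refine ⟨⟨?_, ?_, ?_⟩, ?_⟩ <;> simp [descB]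
  rw [this, Set.ncard_singleton]

lemma eulA_zero_zero : eulA 0 0 = 1 := by
  rw [eulA]
  have : {w : ℕ → ℤ | IsPermWord 0 w ∧ descA 0 w = 0} = {fun _ => 0} := by
    ext u
    simp only [Set.mem_setOf_eq, Set.mem_singleton_iff]
    constructor
    · rintro ⟨⟨⟨_, _, h3⟩, _⟩, _⟩
      funext i
      exact h3 i (by simp)
    · rintro rfl
      refine ⟨⟨⟨?_, ?_, ?_⟩, ?_⟩, ?_⟩ <;> simp [descA]
  rw [this, Set.ncard_singleton]

lemma key_binom_nat (n j : ℕ) :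
    (n + 1) * Nat.choose (n + 1) (j + 1)
    = (j + 2) * Nat.choose (n + 1) (j + 2) + (n + 1 - j) * Nat.choose (n + 1) j := by
  have h1 := Nat.add_one_mul_choose_eq n (j + 1)
  rw [show j + 1 + 1 = j + 2 by omega] at h1
  have h2 : (n + 1 - j) * Nat.choose (n + 1) j = (n + 1) * Nat.choose n j := by
    rw [mul_comm, ← Nat.choose_mul_succ_eq n j]
    ring
  rw [Nat.choose_succ_succ n j, Nat.mul_add, h1, ← h2]
  ring

lemma key_binom_int (n j : ℕ) :
    ((n : ℤ) + 1) * Nat.choose (n + 1) (j + 1)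
    = ((j : ℤ) + 2) * Nat.choose (n + 1) (j + 2)
      + ((n : ℤ) + 1 - (j : ℤ)) * Nat.choose (n + 1) j := by
  by_cases h : j ≤ n + 1
  · have := key_binom_nat n j
    zify [h] at this
    linarith
  · rw [Nat.choose_eq_zero_of_lt (by omega), Nat.choose_eq_zero_of_lt (by omega),
      Nat.choose_eq_zero_of_lt (by omega)]
    push_cast
    ring

lemma key_term (n k i : ℕ) (hi : i ≤ 2 * k) (hin : i ≤ n) (hk : k ≤ n) :
    (i + 1) * Nat.choose (n + 2) (2 * k + 2 - i) + (n - i) * Nat.choose (n + 2) (2 * k + 1 - i)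
    = (2 * k + 3) * Nat.choose (n + 1) (2 * k + 2 - i)
      + (2 * n + 1 - 2 * k) * Nat.choose (n + 1) (2 * k - i) := by
  have e2 : 2 * k + 2 - i = (2 * k - i) + 2 := by omega
  have e1 : 2 * k + 1 - i = (2 * k - i) + 1 := by omega
  rw [e1, e2]
  set j := 2 * k - i with hj
  have p2 : Nat.choose (n + 2) (j + 2) = Nat.choose (n + 1) (j + 1) + Nat.choose (n + 1) (j + 2) :=
    Nat.choose_succ_succ (n + 1) (j + 1)
  have p1 : Nat.choose (n + 2) (j + 1) = Nat.choose (n + 1) j + Nat.choose (n + 1) (j + 1) :=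
    Nat.choose_succ_succ (n + 1) j
  rw [p2, p1]
  have kb := key_binom_int n j
  have hjz : (j : ℤ) = 2 * (k : ℤ) - (i : ℤ) := by omega
  zify [hin, (by omega : 2 * k ≤ 2 * n + 1)]
  linear_combination kb + ((Nat.choose (n + 1) (j + 2) : ℤ) - (Nat.choose (n + 1) j : ℤ)) * hjz

lemma Rvanish (n k : ℕ) (h : n + 1 ≤ k) :
    ∑ i ∈ Finset.range (2 * k + 1), eulA n i * Nat.choose (n + 1) (2 * k - i) = 0 := by
  apply Finset.sum_eq_zero
  intro i hi
  simp only [Finset.mem_range] at hi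
  by_cases h1 : 1 ≤ i ∧ n ≤ i
  · rw [eulA_vanish h1.1 h1.2, zero_mul]
  · push_neg at h1
    have hlt : n + 1 < 2 * k - i := by
      by_cases hz : 1 ≤ i
      · have := h1 hz
        omega
      · omega
    rw [Nat.choose_eq_zero_of_lt hlt, mul_zero]

lemma sum_extend {M m : ℕ} (h : m ≤ M) (f : ℕ → ℕ) :
    ∑ i ∈ Finset.range m, f i = ∑ i ∈ Finset.range M, (if i < m then f i else 0) := by
  have h1 : ∑ i ∈ Finset.range m, (if i < m then f i else 0)
      = ∑ i ∈ Finset.range M, (if i < m then f i else 0) := by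
    apply Finset.sum_subset (Finset.range_subset_range.mpr h)
    intro x _ hx
    rw [if_neg (by simpa using hx)]
  rw [← h1]
  exact Finset.sum_congr rfl (fun i hi => by rw [if_pos (Finset.mem_range.mp hi)])

lemma alg (n k : ℕ) :
    (2 * k + 3) * (∑ i ∈ Finset.range (2 * k + 2 + 1), eulA n i * Nat.choose (n + 1) (2 * k + 2 - i))
      + (2 * n + 1 - 2 * k) * (∑ i ∈ Finset.range (2 * k + 1), eulA n i * Nat.choose (n + 1) (2 * k - i))
    = ∑ i ∈ Finset.range (2 * k + 2 + 1), eulA (n + 1) i * Nat.choose (n + 2) (2 * k + 2 - i) := by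
  by_cases hk : k ≤ n
  · -- main case
    have stepA : ∑ i ∈ Finset.range (2 * k + 2 + 1), eulA (n + 1) i * Nat.choose (n + 2) (2 * k + 2 - i)
        = (∑ i ∈ Finset.range (2 * k + 2 + 1), (i + 1) * eulA n i * Nat.choose (n + 2) (2 * k + 2 - i))
          + ∑ i ∈ Finset.range (2 * k + 2), (n - i) * eulA n i * Nat.choose (n + 2) (2 * k + 1 - i) := by
      rw [Finset.sum_range_succ' (fun i => eulA (n + 1) i * Nat.choose (n + 2) (2 * k + 2 - i)) (2 * k + 2),
        Finset.sum_range_succ' (fun i => (i + 1) * eulA n i * Nat.choose (n + 2) (2 * k + 2 - i)) (2 * k + 2)]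
      have hterm : ∀ i ∈ Finset.range (2 * k + 2),
          eulA (n + 1) (i + 1) * Nat.choose (n + 2) (2 * k + 2 - (i + 1))
          = (i + 1 + 1) * eulA n (i + 1) * Nat.choose (n + 2) (2 * k + 2 - (i + 1))
            + (n - i) * eulA n i * Nat.choose (n + 2) (2 * k + 1 - i) := by
        intro i _
        rw [eulA_recS n i, show 2 * k + 2 - (i + 1) = 2 * k + 1 - i by omega]
        ring
      rw [Finset.sum_congr rfl hterm, Finset.sum_add_distrib, eulA_rec0]
      ring
    rw [stepA, Finset.mul_sum, Finset.mul_sum,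
      sum_extend (show 2 * k + 2 ≤ 2 * k + 2 + 1 by omega)
        (fun i => (n - i) * eulA n i * Nat.choose (n + 2) (2 * k + 1 - i)),
      sum_extend (show 2 * k + 1 ≤ 2 * k + 2 + 1 by omega)
        (fun i => (2 * n + 1 - 2 * k) * (eulA n i * Nat.choose (n + 1) (2 * k - i))),
      ← Finset.sum_add_distrib, ← Finset.sum_add_distrib]
    apply Finset.sum_congr rfl
    intro i hi
    simp only [Finset.mem_range] at hi
    rcases (by omega : i ≤ 2 * k ∨ i = 2 * k + 1 ∨ i = 2 * k + 2) with hc | hc | hc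
    · rw [if_pos (by omega), if_pos (by omega)]
      by_cases hin : i ≤ n
      · have h := key_term n k i hc hin hk
        calc (2 * k + 3) * (eulA n i * Nat.choose (n + 1) (2 * k + 2 - i))
              + (2 * n + 1 - 2 * k) * (eulA n i * Nat.choose (n + 1) (2 * k - i))
            = eulA n i * ((2 * k + 3) * Nat.choose (n + 1) (2 * k + 2 - i)
                + (2 * n + 1 - 2 * k) * Nat.choose (n + 1) (2 * k - i)) := by ring
          _ = eulA n i * ((i + 1) * Nat.choose (n + 2) (2 * k + 2 - i)
                + (n - i) * Nat.choose (n + 2) (2 * k + 1 - i)) := by rw [h]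
          _ = (i + 1) * eulA n i * Nat.choose (n + 2) (2 * k + 2 - i)
                + (n - i) * eulA n i * Nat.choose (n + 2) (2 * k + 1 - i) := by ring
      · rw [eulA_vanish (by omega) (by omega)]
        simp
    · subst hc
      rw [if_neg (by omega), if_pos (by omega)]
      rw [show 2 * k + 2 - (2 * k + 1) = 1 by omega, show 2 * k + 1 - (2 * k + 1) = 0 by omega,
        Nat.choose_one_right, Nat.choose_one_right, Nat.choose_zero_right]
      by_cases h2k : 2 * k + 1 ≤ n
      · have harith : (2 * k + 3) * (n + 1) = (2 * k + 1 + 1) * (n + 2) + (n - (2 * k + 1)) := by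
          zify [h2k]
          ring
        calc (2 * k + 3) * (eulA n (2 * k + 1) * (n + 1)) + 0
            = eulA n (2 * k + 1) * ((2 * k + 3) * (n + 1)) := by ring
          _ = eulA n (2 * k + 1) * ((2 * k + 1 + 1) * (n + 2) + (n - (2 * k + 1))) := by
              rw [harith]
          _ = (2 * k + 1 + 1) * eulA n (2 * k + 1) * (n + 2)
                + (n - (2 * k + 1)) * eulA n (2 * k + 1) * 1 := by ring
      · rw [eulA_vanish (by omega) (by omega)]
        simp
    · subst hc
      rw [if_neg (by omega), if_neg (by omega)]
      rw [show 2 * k + 2 - (2 * k + 2) = 0 by omega, Nat.choose_zero_right,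
        Nat.choose_zero_right]
      ring
  · -- degenerate case
    have h1 := Rvanish n (k + 1) (by omega)
    have h2 := Rvanish n k (by omega)
    have h3 := Rvanish (n + 1) (k + 1) (by omega)
    simp only [show 2 * (k + 1) = 2 * k + 2 from by omega,
      show n + 1 + 1 = n + 2 from by omega] at h1 h3
    rw [h1, h2, h3, mul_zero, mul_zero]
    omega

theorem main_thm (n k : ℕ) :
    eulB n k = ∑ i ∈ Finset.range (2 * k + 1), eulA n i * Nat.choose (n + 1) (2 * k - i) := by
  induction n generalizing k with
  | zero =>
    cases k with
    | zero =>
      rw [eulB_zero_zero]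
      norm_num [eulA_zero_zero]
    | succ m =>
      rw [eulB_vanish (by omega)]
      exact (Rvanish 0 (m + 1) (by omega)).symm
  | succ n IH =>
    cases k with
    | zero =>
      rw [eulB_rec0, IH 0]
      norm_num [eulA_rec0]
    | succ m =>
      rw [eulB_recS n m, IH (m + 1), IH m]
      have := alg n m
      simp only [show 2 * (m + 1) = 2 * m + 2 from by omega]
      convert this using 2 <;> omega

/-- `B(n,k) = Σ_{i=0}^{2k} A(n,i) · C(n+1, 2k−i)` for `n ≥ 1`, `0 ≤ k ≤ n`. -/
theorem eulB_eq_sum (n k : ℕ) (hn : 1 ≤ n) (hk : k ≤ n) :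
    eulB n k = ∑ i ∈ Finset.range (2 * k + 1), eulA n i * Nat.choose (n + 1) (2 * k - i) :=
  main_thm n k
end

section
/- For all n ≥ 1 and 0 ≤ k ≤ n−1, 2^n · A(n,k) = Σ_{i=0}^{2k+1} A(n,i) · C(n+1, 2k+1−i), where A(n,i) are the Eulerian numbers and C denotes binomial coefficients. -/
section EulerianAux
open Finset PowerSeries

def eulRec : ℕ → ℕ → ℕ
  | 0, 0 => 1
  | 0, _+1 => 0
  | n+1, 0 => eulRec n 0
  | n+1, m+1 => (m+2) * eulRec n (m+1) + (n - m) * eulRec n m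

def eulG (n m : ℕ) : ℤ := ∑ j ∈ range (m+1), (-1:ℤ)^j * ((n+1).choose j) * ((m:ℤ)+1-j)^n

lemma eulG_rec (n m : ℕ) :
    eulG (n+1) (m+1) = ((m:ℤ)+2) * eulG n (m+1) + ((n:ℤ) - m) * eulG n m := by
  have hch : ∀ j : ℕ, ((n:ℤ)+1) * (n.choose j) = ((n+1).choose (j+1)) * ((j:ℤ)+1) := by
    intro j
    exact_mod_cast congrArg (Nat.cast : ℕ → ℤ) (Nat.add_one_mul_choose_eq n j)
  have hpas : ∀ j : ℕ, ((n+1).choose (j+1) : ℤ) = (n.choose j : ℤ) + (n.choose (j+1) : ℤ) := by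
    intro j
    exact_mod_cast congrArg (Nat.cast : ℕ → ℤ) (Nat.choose_succ_succ n j)
  have hpas2 : ∀ j : ℕ, ((n+2).choose (j+1) : ℤ) = ((n+1).choose j : ℤ) + ((n+1).choose (j+1) : ℤ) := by
    intro j
    exact_mod_cast congrArg (Nat.cast : ℕ → ℤ) (Nat.choose_succ_succ (n+1) j)
  set W1 : ℤ := ∑ j ∈ range (m+1), (-1:ℤ)^j * (n.choose j) * ((m:ℤ)+1-j)^n with hW1
  set W2 : ℤ := ∑ j ∈ range m, (-1:ℤ)^j * (n.choose j) * ((m:ℤ)-j)^n with hW2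
  have hGm1 : eulG n (m+1) = ∑ j ∈ range (m+2), (-1:ℤ)^j * ((n+1).choose j) * ((m:ℤ)+2-j)^n := by
    apply Finset.sum_congr rfl; intro j _; push_cast; ring
  have hGm : eulG n m = ∑ j ∈ range (m+1), (-1:ℤ)^j * ((n+1).choose j) * ((m:ℤ)+1-j)^n := rfl
  have hV1 : ∑ j ∈ range (m+2), (j:ℤ) * ((-1:ℤ)^j * ((n+1).choose j) * ((m:ℤ)+2-j)^n)
      = -(((n:ℤ)+1) * W1) := by
    rw [Finset.sum_range_succ']
    simp only [Nat.cast_zero, zero_mul, add_zero]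
    rw [hW1, Finset.mul_sum, ← Finset.sum_neg_distrib]
    apply Finset.sum_congr rfl
    intro j _
    push_cast
    linear_combination ((-1:ℤ)^j * ((m:ℤ)+1-j)^n) * hch j
  have hV2 : ∑ j ∈ range (m+1), (j:ℤ) * ((-1:ℤ)^j * ((n+1).choose j) * ((m:ℤ)+1-j)^n)
      = -(((n:ℤ)+1) * W2) := by
    rw [Finset.sum_range_succ']
    simp only [Nat.cast_zero, zero_mul, add_zero]
    rw [hW2, Finset.mul_sum, ← Finset.sum_neg_distrib]
    apply Finset.sum_congr rfl
    intro j _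
    push_cast
    linear_combination ((-1:ℤ)^j * ((m:ℤ)-j)^n) * hch j
  have hT1 : (∑ j ∈ range (m+2), (-1:ℤ)^j * ((n+1).choose j) * ((m:ℤ)+2-j)^(n+1))
      = ((m:ℤ)+2) * eulG n (m+1) + ((n:ℤ)+1) * W1 := by
    have e1 : ∀ j ∈ range (m+2), (-1:ℤ)^j * ((n+1).choose j) * ((m:ℤ)+2-j)^(n+1)
        = ((m:ℤ)+2) * ((-1:ℤ)^j * ((n+1).choose j) * ((m:ℤ)+2-j)^n)
          - (j:ℤ) * ((-1:ℤ)^j * ((n+1).choose j) * ((m:ℤ)+2-j)^n) := by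
      intro j _; ring
    rw [Finset.sum_congr rfl e1, Finset.sum_sub_distrib, hV1, ← Finset.mul_sum, ← hGm1]
    ring
  have hT2 : (∑ j ∈ range (m+1), (-1:ℤ)^j * ((n+1).choose j) * ((m:ℤ)+1-j)^(n+1))
      = ((m:ℤ)+1) * eulG n m + ((n:ℤ)+1) * W2 := by
    have e1 : ∀ j ∈ range (m+1), (-1:ℤ)^j * ((n+1).choose j) * ((m:ℤ)+1-j)^(n+1)
        = ((m:ℤ)+1) * ((-1:ℤ)^j * ((n+1).choose j) * ((m:ℤ)+1-j)^n)
          - (j:ℤ) * ((-1:ℤ)^j * ((n+1).choose j) * ((m:ℤ)+1-j)^n) := by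
      intro j _; ring
    rw [Finset.sum_congr rfl e1, Finset.sum_sub_distrib, hV2, ← Finset.mul_sum, ← hGm]
    ring
  have hPas : eulG n m = W1 - W2 := by
    rw [hGm, hW1, hW2, Finset.sum_range_succ',
      Finset.sum_range_succ' (fun j => (-1:ℤ)^j * (n.choose j) * ((m:ℤ)+1-j)^n)]
    have key : ∀ j ∈ range m, (-1:ℤ)^(j+1) * ((n+1).choose (j+1)) * ((m:ℤ)+1-(↑(j+1):ℤ))^n
        = ((-1:ℤ)^(j+1) * (n.choose (j+1)) * ((m:ℤ)+1-(↑(j+1):ℤ))^n)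
          - ((-1:ℤ)^j * (n.choose j) * ((m:ℤ)-(j:ℤ))^n) := by
      intro j _
      have h2 : ((m:ℤ)+1-(↑(j+1):ℤ)) = (m:ℤ)-j := by push_cast; ring
      rw [h2]
      linear_combination ((-1:ℤ)^(j+1) * ((m:ℤ)-j)^n) * hpas j
    rw [Finset.sum_congr rfl key, Finset.sum_sub_distrib]
    simp only [Nat.choose_zero_right, Nat.cast_zero, Nat.cast_one, pow_zero]
    ring
  have hMain : eulG (n+1) (m+1)
      = (∑ j ∈ range (m+2), (-1:ℤ)^j * ((n+1).choose j) * ((m:ℤ)+2-j)^(n+1))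
        - (∑ j ∈ range (m+1), (-1:ℤ)^j * ((n+1).choose j) * ((m:ℤ)+1-j)^(n+1)) := by
    have h0 : eulG (n+1) (m+1)
        = ∑ j ∈ range (m+2), (-1:ℤ)^j * ((n+2).choose j) * ((m:ℤ)+2-j)^(n+1) := by
      apply Finset.sum_congr rfl; intro j _; push_cast; ring
    rw [h0, Finset.sum_range_succ',
      Finset.sum_range_succ' (fun j => (-1:ℤ)^j * ((n+1).choose j) * ((m:ℤ)+2-j)^(n+1))]
    have key : ∀ j ∈ range (m+1), (-1:ℤ)^(j+1) * ((n+2).choose (j+1)) * ((m:ℤ)+2-(↑(j+1):ℤ))^(n+1)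
        = ((-1:ℤ)^(j+1) * ((n+1).choose (j+1)) * ((m:ℤ)+2-(↑(j+1):ℤ))^(n+1))
          - ((-1:ℤ)^j * ((n+1).choose j) * ((m:ℤ)+1-(j:ℤ))^(n+1)) := by
      intro j _
      have h2 : ((m:ℤ)+2-(↑(j+1):ℤ)) = (m:ℤ)+1-j := by push_cast; ring
      rw [h2]
      linear_combination ((-1:ℤ)^(j+1) * ((m:ℤ)+1-j)^(n+1)) * hpas2 j
    rw [Finset.sum_congr rfl key, Finset.sum_sub_distrib]
    simp only [Nat.choose_zero_right, Nat.cast_zero, Nat.cast_one, pow_zero]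
    ring
  rw [hMain, hT1, hT2]
  linear_combination (-((n:ℤ)+1)) * hPas

lemma eulRec_vanish : ∀ n m : ℕ, n ≤ m → 1 ≤ m → eulRec n m = 0 := by
  intro n
  induction n with
  | zero => intro m h1 h2; match m, h2 with | (m+1), _ => rfl
  | succ n ih =>
    intro m h1 h2
    match m, h1 with
    | (m+1), h1 =>
      show (m+2) * eulRec n (m+1) + (n - m) * eulRec n m = 0
      have hle : n ≤ m := by omega
      rw [ih (m+1) (by omega) (by omega)]
      rcases Nat.eq_or_lt_of_le hle with h | h
      · simp [h]
      · rw [ih m (by omega) (by omega)]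
        simp
lemma eulG_zero_right (n : ℕ) : eulG n 0 = 1 := by
  simp [eulG]

lemma eulRec_zero_right (n : ℕ) : eulRec n 0 = 1 := by
  induction n with
  | zero => rfl
  | succ n ih => exact ih

lemma eulRec_eq_eulG : ∀ n m : ℕ, (eulRec n m : ℤ) = eulG n m := by
  intro n
  induction n with
  | zero =>
    intro m
    match m with
    | 0 => simp [eulG, eulRec]
    | (m+1) =>
      show ((0:ℕ) : ℤ) = eulG 0 (m+1)
      have : eulG 0 (m+1) = ∑ j ∈ range (m+2), (-1:ℤ)^j * ((1:ℕ).choose j) := by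
        apply Finset.sum_congr rfl; intro j _; simp
      rw [this]
      have h2 : ∀ j ∈ range (m+2), j ∉ range 2 → (-1:ℤ)^j * ((1:ℕ).choose j) = 0 := by
        intro j _ hj
        have : (1:ℕ) < j := by simpa [Finset.mem_range] using hj
        simp [Nat.choose_eq_zero_of_lt this]
      rw [← Finset.sum_subset (by intro j hj; simp at hj ⊢; omega) h2]
      decide
  | succ n ih =>
    intro m
    match m with
    | 0 => rw [eulG_zero_right]; rw [show eulRec (n+1) 0 = eulRec n 0 from rfl, eulRec_zero_right]; rfl
    | (m+1) =>
      rw [eulG_rec]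
      show (((m+2) * eulRec n (m+1) + (n - m) * eulRec n m : ℕ) : ℤ) = _
      rcases le_or_gt m n with h | h
      · push_cast [h]
        rw [ih (m+1), ih m]
      · -- m > n : everything vanishes
        rw [eulRec_vanish n (m+1) (by omega) (by omega), eulRec_vanish n m (by omega) (by omega)]
        have g1 : eulG n (m+1) = 0 := by rw [← ih (m+1), eulRec_vanish n (m+1) (by omega) (by omega)]; rfl
        have g2 : eulG n m = 0 := by rw [← ih m, eulRec_vanish n m (by omega) (by omega)]; rfl
        rw [g1, g2]
        push_cast
        ring

noncomputable abbrev PS := PowerSeries ℤ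

lemma coeff_one_sub_X_pow (N m : ℕ) :
    PowerSeries.coeff m ((1 - PowerSeries.X)^N : PS) = (-1:ℤ)^m * (N.choose m) := by
  have h : ((1 - PowerSeries.X)^N : PS) = ∑ j ∈ range (N+1), ((-1:ℤ)^j * (N.choose j)) • (PowerSeries.X:PS)^j := by
    rw [sub_eq_add_neg, add_comm, add_pow]
    apply Finset.sum_congr rfl
    intro j _
    rw [neg_pow, one_pow, mul_one, zsmul_eq_mul]
    push_cast
    ring
  rw [h, map_sum]
  simp only [map_zsmul, PowerSeries.coeff_X_pow, smul_eq_mul]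
  rw [Finset.sum_congr rfl (fun j _ => by rw [mul_ite, mul_one, mul_zero])]
  rw [Finset.sum_ite_eq (range (N+1)) m (fun j => (-1:ℤ)^j * (N.choose j))]
  split
  · rfl
  · rename_i hm
    have : N < m := by simpa using hm
    simp [Nat.choose_eq_zero_of_lt this]

lemma coeff_one_add_X_pow (N m : ℕ) :
    PowerSeries.coeff m ((1 + PowerSeries.X)^N : PS) = (N.choose m : ℤ) := by
  have h : ((1 + PowerSeries.X)^N : PS) = ∑ j ∈ range (N+1), ((N.choose j : ℤ)) • (PowerSeries.X:PS)^j := by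
    rw [add_comm, add_pow]
    apply Finset.sum_congr rfl
    intro j _
    rw [one_pow, mul_one, zsmul_eq_mul]
    push_cast
    ring
  rw [h, map_sum]
  simp only [map_zsmul, PowerSeries.coeff_X_pow, smul_eq_mul]
  rw [Finset.sum_congr rfl (fun j _ => by rw [mul_ite, mul_one, mul_zero])]
  rw [Finset.sum_ite_eq (range (N+1)) m (fun j => ((N.choose j : ℤ)))]
  split
  · rfl
  · rename_i hm
    have : N < m := by simpa using hm
    simp [Nat.choose_eq_zero_of_lt this]

lemma coeff_one_sub_X_sq_pow (N m : ℕ) :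
    PowerSeries.coeff m ((1 - PowerSeries.X^2)^N : PS)
      = ∑ j ∈ range (N+1), (if m = 2*j then (-1:ℤ)^j * (N.choose j) else 0) := by
  have h : ((1 - PowerSeries.X^2)^N : PS) = ∑ j ∈ range (N+1), ((-1:ℤ)^j * (N.choose j)) • (PowerSeries.X:PS)^(2*j) := by
    rw [sub_eq_add_neg, add_comm, add_pow]
    apply Finset.sum_congr rfl
    intro j _
    rw [neg_pow, one_pow, mul_one, zsmul_eq_mul, pow_mul]
    push_cast
    ring
  rw [h, map_sum]
  simp only [map_zsmul, PowerSeries.coeff_X_pow, smul_eq_mul]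
  apply Finset.sum_congr rfl
  intro j _
  rw [mul_ite, mul_one, mul_zero]

lemma key_numeric (n k : ℕ) (hk : k ≤ n + 1) :
    (2:ℤ)^n * eulG n k = ∑ i ∈ range (2*k+2), (eulRec n i : ℤ) * ((n+1).choose (2*k+1-i) : ℤ) := by
  set A : PowerSeries ℤ := PowerSeries.mk (fun m => (eulRec n m : ℤ)) with hA
  set f : PowerSeries ℤ := PowerSeries.mk (fun m => ((m:ℤ)+1)^n) with hf
  have hL : A = (1 - PowerSeries.X)^(n+1) * f := by
    ext m
    rw [hA, PowerSeries.coeff_mk, PowerSeries.coeff_mul,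
      Finset.Nat.sum_antidiagonal_eq_sum_range_succ_mk, eulRec_eq_eulG]
    unfold eulG
    apply Finset.sum_congr rfl
    intro i hi
    rw [coeff_one_sub_X_pow, hf, PowerSeries.coeff_mk]
    have : ((m - i : ℕ) : ℤ) = (m:ℤ) - i := by
      rw [Nat.cast_sub (by simpa using Nat.lt_succ_iff.mp (Finset.mem_range.mp hi))]
    rw [this]
    ring
  have hRHS : ∑ i ∈ range (2*k+2), (eulRec n i : ℤ) * ((n+1).choose (2*k+1-i) : ℤ)
      = PowerSeries.coeff (2*k+1) (A * (1 + PowerSeries.X)^(n+1)) := by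
    rw [PowerSeries.coeff_mul, Finset.Nat.sum_antidiagonal_eq_sum_range_succ_mk]
    apply Finset.sum_congr rfl
    intro i _
    rw [hA, PowerSeries.coeff_mk, coeff_one_add_X_pow]
  have hprod : A * (1 + PowerSeries.X)^(n+1) = (1 - PowerSeries.X^2)^(n+1) * f := by
    rw [hL]
    have h1 : ((1:PowerSeries ℤ) - PowerSeries.X^2) = (1 - PowerSeries.X) * (1 + PowerSeries.X) := by
      ring
    rw [h1, mul_pow]
    ring
  rw [hRHS, hprod, PowerSeries.coeff_mul, Finset.Nat.sum_antidiagonal_eq_sum_range_succ_mk]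
  have step1 : ∀ i ∈ range (2*k+2),
      PowerSeries.coeff i ((1 - PowerSeries.X^2)^(n+1)) * PowerSeries.coeff (2*k+1-i) f
      = ∑ j ∈ range (n+2), (if i = 2*j then ((-1:ℤ)^j * ((n+1).choose j)) * (((2*k+1-i:ℕ):ℤ)+1)^n else 0) := by
    intro i _
    rw [coeff_one_sub_X_sq_pow, hf, PowerSeries.coeff_mk, Finset.sum_mul]
    apply Finset.sum_congr rfl
    intro j _
    rw [ite_mul, zero_mul]
  rw [Finset.sum_congr rfl step1, Finset.sum_comm]
  have step2 : ∀ j ∈ range (n+2),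
      (∑ i ∈ range (2*k+2), if i = 2*j then ((-1:ℤ)^j * ((n+1).choose j)) * (((2*k+1-i:ℕ):ℤ)+1)^n else 0)
      = (if 2*j ∈ range (2*k+2) then ((-1:ℤ)^j * ((n+1).choose j)) * (((2*k+1-2*j:ℕ):ℤ)+1)^n else 0) := by
    intro j _
    exact Finset.sum_ite_eq' (range (2*k+2)) (2*j)
      (fun i => ((-1:ℤ)^j * ((n+1).choose j)) * (((2*k+1-i:ℕ):ℤ)+1)^n)
  rw [Finset.sum_congr rfl step2]
  rw [← Finset.sum_subset (Finset.range_subset_range.mpr (by omega : k+1 ≤ n+2))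
    (by intro j _ hj; simp only [Finset.mem_range] at hj ⊢
        rw [if_neg]; simp; omega)]
  have step3 : ∀ j ∈ range (k+1),
      (if 2*j ∈ range (2*k+2) then ((-1:ℤ)^j * ((n+1).choose j)) * (((2*k+1-2*j:ℕ):ℤ)+1)^n else 0)
      = (2:ℤ)^n * ((-1:ℤ)^j * ((n+1).choose j) * ((k:ℤ)+1-j)^n) := by
    intro j hj
    have hjk : j ≤ k := Nat.lt_succ_iff.mp (Finset.mem_range.mp hj)
    rw [if_pos (by simp only [Finset.mem_range]; omega)]
    have : ((2*k+1-2*j:ℕ):ℤ) + 1 = 2 * ((k:ℤ)+1-j) := by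
      rw [Nat.cast_sub (by omega)]
      push_cast
      ring
    rw [this, mul_pow]
    ring
  rw [Finset.sum_congr rfl step3, ← Finset.mul_sum]
  rfl

def dsc : List ℤ → ℕ
  | [] => 0
  | [_] => 0
  | a :: b :: t => (if b < a then 1 else 0) + dsc (b :: t)

lemma dsc_cons_le (a : ℤ) (l : List ℤ) : dsc (a :: l) ≤ l.length := by
  induction l generalizing a with
  | nil => simp [dsc]
  | cons b t ih =>
    show (if b < a then 1 else 0) + dsc (b :: t) ≤ t.length + 1
    have := ih b
    split <;> omega

lemma card_filter_succ' (Q : ℕ → Prop) [DecidablePred Q] (N : ℕ) :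
    ((range (N+1)).filter Q).card = ((range N).filter (fun i => Q (i+1))).card + (if Q 0 then 1 else 0) := by
  rw [Finset.card_filter, Finset.card_filter, Finset.sum_range_succ']

lemma cnt_insert (x : ℤ) : ∀ (l : List ℤ), (∀ y ∈ l, y < x) → ∀ k,
    ((range (l.length + 1)).filter (fun p => dsc (List.insertIdx l p x) = k)).card
    = if k = dsc l then dsc l + 1 else if k = dsc l + 1 then l.length - dsc l else 0 := by
  intro l
  induction l with
  | nil =>
    intro _ k
    simp only [List.length_nil, Nat.zero_add, Finset.range_one, Finset.filter_singleton,
      List.insertIdx_zero]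
    have h1 : dsc [x] = 0 := rfl
    have h2 : dsc ([] : List ℤ) = 0 := rfl
    simp only [h1, h2]
    by_cases hk : k = 0
    · simp [hk]
    · simp [hk, Ne.symm hk]
  | cons a t ih =>
    intro hlt k
    have hax : a < x := hlt a (by simp)
    have htx : ∀ y ∈ t, y < x := fun y hy => hlt y (by simp [hy])
    rw [show (a :: t).length + 1 = (t.length + 1) + 1 by simp, card_filter_succ']
    simp only [List.insertIdx_succ_cons, List.insertIdx_zero]
    have hxat : dsc (x :: a :: t) = 1 + dsc (a :: t) := by
      show (if a < x then 1 else 0) + dsc (a :: t) = 1 + dsc (a :: t)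
      rw [if_pos hax]
    simp only [hxat]
    cases t with
    | nil =>
      -- l = [a]
      erw [card_filter_succ']
      simp only [List.insertIdx_succ_cons, List.insertIdx_zero]
      have h1 : dsc (a :: [x]) = 0 := by
        show (if x < a then 1 else 0) + dsc [x] = 0
        rw [if_neg (not_lt.mpr (le_of_lt hax))]
        rfl
      have h2 : dsc [a] = 0 := rfl
      simp only [h1, h2, List.length_nil, List.length_cons]
      simp only [Finset.range_zero, Finset.filter_empty, Finset.card_empty]
      by_cases hk : k = 0
      · simp [hk]
      · by_cases hk1 : k = 1 <;> simp [hk, hk1] <;> exact ⟨⟨rfl, by omega⟩, by omega⟩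
    | cons b t' =>
      set e := dsc (b :: t') with he
      have hebd : e ≤ t'.length := dsc_cons_le b t'
      have hd : dsc (a :: b :: t') = (if b < a then 1 else 0) + e := rfl
      have hIH := ih htx
      have hxt : dsc (x :: b :: t') = 1 + e := by
        show (if b < x then 1 else 0) + dsc (b :: t') = 1 + e
        rw [if_pos (htx b (by simp))]
      have hpeel : ∀ j, ((range ((b::t').length + 1)).filter (fun p => dsc (List.insertIdx (b::t') p x) = j)).card
          = ((range ((b::t').length)).filter (fun r => dsc (b :: List.insertIdx t' r x) = j)).card
            + (if 1 + e = j then 1 else 0) := by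
        intro j
        rw [card_filter_succ']
        simp only [List.insertIdx_succ_cons, List.insertIdx_zero, hxt]
        rfl
      set B : ℕ → ℕ := fun j => ((range ((b::t').length)).filter (fun r => dsc (b :: List.insertIdx t' r x) = j)).card with hB
      have hAB : ∀ j, B j + (if 1 + e = j then 1 else 0)
          = if j = e then e + 1 else if j = e + 1 then (b::t').length - e else 0 := by
        intro j
        rw [← hIH j, hpeel j]
      erw [card_filter_succ']
      simp only [List.insertIdx_succ_cons, List.insertIdx_zero]
      have hax2 : dsc (a :: x :: b :: t') = 1 + e := by
        show (if x < a then 1 else 0) + dsc (x :: b :: t') = 1 + e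
        rw [if_neg (not_lt.mpr (le_of_lt hax)), hxt, zero_add]
      have habm : ∀ r, dsc (a :: b :: List.insertIdx t' r x) = (if b < a then 1 else 0) + dsc (b :: List.insertIdx t' r x) := by
        intro r; rfl
      simp only [habm, hax2]
      by_cases hba : b < a
      · -- δ = 1, d = 1 + e
        simp only [hd, if_pos hba]
        cases k with
        | zero =>
          have hc0 : ((range ((b::t').length)).filter (fun r => (1 + dsc (b :: List.insertIdx t' r x) : ℕ) = 0)).card = 0 := by
            apply Finset.card_eq_zero.mpr
            apply Finset.filter_eq_empty_iff.mpr
            intro r _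
            omega
          rw [hc0]
          simp only [List.length_cons]
          split_ifs <;> first | omega | exact (‹False›).elim
        | succ k' =>
          have hcount : ((range ((b::t').length)).filter (fun r => (1 + dsc (b :: List.insertIdx t' r x) : ℕ) = k' + 1)).card
              = B k' := by
            rw [hB]
            apply congrArg
            apply Finset.filter_congr
            intro r _
            constructor <;> intro h <;> omega
          rw [hcount]
          have h1 := hAB k'
          simp only [hB, List.length_cons] at h1 ⊢
          split_ifs at h1 ⊢ <;> omega
      · -- δ = 0, d = e
        simp only [hd, if_neg hba, Nat.zero_add]
        have h1 := hAB k
        simp only [hB, List.length_cons] at h1 ⊢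
        split_ifs at h1 ⊢ <;> omega

lemma erase_insertIdx (x : ℤ) : ∀ (p : ℕ) (l : List ℤ), x ∉ l → p ≤ l.length →
    (List.insertIdx l p x).erase x = l := by
  intro p
  induction p with
  | zero => intro l _ _; rw [List.insertIdx_zero, List.erase_cons_head]
  | succ p ih =>
    intro l hx hp
    match l with
    | a :: t =>
      rw [List.insertIdx_succ_cons]
      have hax : a ≠ x := fun h => hx (h ▸ List.mem_cons_self (a := a) (l := t))
      rw [List.erase_cons_tail (by simpa using hax)]
      rw [ih t (fun h => hx (List.mem_cons_of_mem a h)) (by simpa using hp)]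

lemma indexOf_insertIdx (x : ℤ) : ∀ (p : ℕ) (l : List ℤ), x ∉ l → p ≤ l.length →
    (List.insertIdx l p x).idxOf x = p := by
  intro p
  induction p with
  | zero => intro l _ _; rw [List.insertIdx_zero, List.idxOf_cons_self]
  | succ p ih =>
    intro l hx hp
    match l with
    | a :: t =>
      rw [List.insertIdx_succ_cons]
      have hax : a ≠ x := fun h => hx (h ▸ List.mem_cons_self (a := a) (l := t))
      rw [List.idxOf_cons_ne _ hax, ih t (fun h => hx (List.mem_cons_of_mem a h)) (by simpa using hp)]

lemma insertIdx_indexOf_erase (x : ℤ) : ∀ (m : List ℤ), x ∈ m →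
    List.insertIdx (m.erase x) (m.idxOf x) x = m := by
  intro m
  induction m with
  | nil => intro h; simp at h
  | cons a t ih =>
    intro hx
    by_cases hax : a = x
    · subst hax
      rw [List.idxOf_cons_self, List.erase_cons_head, List.insertIdx_zero]
    · have hxt : x ∈ t := by
        rcases List.mem_cons.mp hx with h | h
        · exact absurd h.symm hax
        · exact h
      rw [List.idxOf_cons_ne _ (Ne.symm (fun h => hax h.symm)), List.erase_cons_tail (by simpa using hax)]
      rw [Nat.succ_eq_add_one, List.insertIdx_succ_cons, ih hxt]

def baseL (n : ℕ) : List ℤ := (List.range n).map (fun i : ℕ => (i:ℤ)+1)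

noncomputable def permsF (n : ℕ) : Finset (List ℤ) := (baseL n).permutations.toFinset

lemma mem_permsF {n : ℕ} {l : List ℤ} : l ∈ permsF n ↔ l.Perm (baseL n) := by
  simp [permsF, List.mem_permutations]

lemma length_baseL (n : ℕ) : (baseL n).length = n := by
  rw [baseL, List.length_map, List.length_range]

lemma mem_baseL {n : ℕ} {y : ℤ} : y ∈ baseL n ↔ 1 ≤ y ∧ y ≤ n := by
  simp only [baseL, List.mem_map, List.mem_range]
  constructor
  · rintro ⟨i, hi, rfl⟩
    constructor
    · have : (0:ℤ) ≤ (i:ℤ) := Int.natCast_nonneg i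
      omega
    · have : (i:ℤ) + 1 ≤ (n:ℤ) := by exact_mod_cast Nat.succ_le_of_lt hi
      omega
  · intro ⟨h1, h2⟩
    refine ⟨(y - 1).toNat, by omega, by omega⟩

lemma baseL_succ (n : ℕ) : baseL (n+1) = baseL n ++ [(n:ℤ)+1] := by
  simp [baseL, List.range_succ]

lemma count_lemma : ∀ n k, ((permsF n).filter (fun l => dsc l = k)).card = eulRec n k := by
  intro n
  induction n with
  | zero =>
    intro k
    have h0 : permsF 0 = {[]} := by
      simp [permsF, baseL, List.permutations_nil]
    rw [h0]
    match k with
    | 0 =>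
      rw [Finset.filter_singleton, if_pos (by rfl)]
      rfl
    | (k+1) =>
      rw [Finset.filter_singleton, if_neg (by simp [dsc])]
      rfl
  | succ n ih =>
    intro k
    set x : ℤ := (n:ℤ)+1 with hxdef
    have hfacts : ∀ l ∈ permsF n, l.length = n ∧ (∀ y ∈ l, y < x) ∧ x ∉ l := by
      intro l hl
      have hp := mem_permsF.mp hl
      have hlen : l.length = n := by rw [hp.length_eq, length_baseL]
      have hel : ∀ y ∈ l, y < x := by
        intro y hy
        have := mem_baseL.mp (hp.mem_iff.mp hy)
        omega
      exact ⟨hlen, hel, fun h => by have := hel x h; omega⟩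
    have hxnotbase : x ∉ baseL n := by
      intro h; have := mem_baseL.mp h; omega
    have key : (permsF (n+1)).filter (fun m => dsc m = k)
        = (permsF n).biUnion (fun l =>
            ((range (n+1)).filter (fun p => dsc (List.insertIdx l p x) = k)).image
              (fun p => List.insertIdx l p x)) := by
      ext m
      simp only [Finset.mem_filter, Finset.mem_biUnion, Finset.mem_image]
      constructor
      · rintro ⟨hm, hd⟩
        have hperm := mem_permsF.mp hm
        have hxm : x ∈ m := by
          rw [hperm.mem_iff, baseL_succ]
          simp [hxdef]
        refine ⟨m.erase x, ?_, m.idxOf x, ?_, ?_⟩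
        · apply mem_permsF.mpr
          have h1 : (m.erase x).Perm ((baseL (n+1)).erase x) := hperm.erase x
          rwa [baseL_succ, List.erase_append_right _ hxnotbase, List.erase_cons_head,
            List.append_nil] at h1
        · constructor
          · rw [Finset.mem_range]
            have := List.idxOf_lt_length_iff.mpr hxm
            have hlm : m.length = n+1 := by rw [hperm.length_eq, length_baseL]
            omega
          · rw [insertIdx_indexOf_erase x m hxm]; exact hd
        · exact insertIdx_indexOf_erase x m hxm
      · rintro ⟨l, hl, p, hp, rfl⟩
        obtain ⟨hp1, hp2⟩ := hp
        rw [Finset.mem_range] at hp1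
        obtain ⟨hlen, hel, hxl⟩ := hfacts l hl
        have hple : p ≤ l.length := by omega
        constructor
        · apply mem_permsF.mpr
          have h1 : (List.insertIdx l p x).Perm (x :: l) := List.perm_insertIdx x l hple
          have h2 : (x :: l).Perm (x :: baseL n) := (mem_permsF.mp hl).cons x
          have h3 : (baseL n ++ [x]).Perm (x :: baseL n) := List.perm_append_singleton x _
          rw [baseL_succ]
          exact (h1.trans h2).trans h3.symm
        · exact hp2
    rw [key, Finset.card_biUnion]
    · -- sum computation
      have hsum : ∀ l ∈ permsF n,
          (((range (n+1)).filter (fun p => dsc (List.insertIdx l p x) = k)).image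
            (fun p => List.insertIdx l p x)).card
          = if k = dsc l then dsc l + 1 else if k = dsc l + 1 then n - dsc l else 0 := by
        intro l hl
        obtain ⟨hlen, hel, hxl⟩ := hfacts l hl
        have hinj : Set.InjOn (fun p => List.insertIdx l p x)
            ↑((range (n+1)).filter (fun p => dsc (List.insertIdx l p x) = k)) := by
          intro p hp q hq hpq
          rw [Finset.mem_coe, Finset.mem_filter, Finset.mem_range] at hp hq
          have h1 := indexOf_insertIdx x p l hxl (by omega)
          have h2 := indexOf_insertIdx x q l hxl (by omega)
          simp only at hpq
          rw [← h1, ← h2, hpq]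
        rw [Finset.card_image_of_injOn hinj]
        have hc := cnt_insert x l hel k
        rw [hlen] at hc
        rw [hc]
      rw [Finset.sum_congr rfl hsum]
      match k with
      | 0 =>
        have : ∀ l ∈ permsF n,
            (if 0 = dsc l then dsc l + 1 else if 0 = dsc l + 1 then n - dsc l else 0)
            = if dsc l = 0 then 1 else 0 := by
          intro l _; split_ifs <;> first | omega | exact (‹False›).elim
        rw [Finset.sum_congr rfl this, ← Finset.card_filter, ih 0]
        show eulRec n 0 = eulRec (n+1) 0
        rfl
      | (k'+1) =>
        have : ∀ l ∈ permsF n,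
            (if k'+1 = dsc l then dsc l + 1 else if k'+1 = dsc l + 1 then n - dsc l else 0)
            = (if dsc l = k'+1 then k'+2 else 0) + (if dsc l = k' then n - k' else 0) := by
          intro l _; split_ifs <;> first | omega | exact (‹False›).elim
        rw [Finset.sum_congr rfl this, Finset.sum_add_distrib]
        rw [← Finset.sum_filter, ← Finset.sum_filter]
        rw [Finset.sum_const, Finset.sum_const, smul_eq_mul, smul_eq_mul, ih (k'+1), ih k']
        show eulRec n (k'+1) * (k'+2) + eulRec n k' * (n-k') = (k'+2) * eulRec n (k'+1) + (n - k') * eulRec n k'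
        ring
    · -- disjointness
      intro l1 h1 l2 h2 hne
      rw [Function.onFun, Finset.disjoint_left]
      intro m hm1 hm2
      apply hne
      rw [Finset.mem_image] at hm1 hm2
      obtain ⟨p1, hp1, he1⟩ := hm1
      obtain ⟨p2, hp2, he2⟩ := hm2
      rw [Finset.mem_filter, Finset.mem_range] at hp1 hp2
      obtain ⟨hl1, _, hx1⟩ := hfacts l1 h1
      obtain ⟨hl2, _, hx2⟩ := hfacts l2 h2
      have e1 : m.erase x = l1 := by rw [← he1]; exact erase_insertIdx x p1 l1 hx1 (by omega)
      have e2 : m.erase x = l2 := by rw [← he2]; exact erase_insertIdx x p2 l2 hx2 (by omega)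
      rw [← e1, ← e2]

def listOf (n : ℕ) (w : ℕ → ℤ) : List ℤ := (List.range n).map (fun i : ℕ => w (i+1))
def wordOf (n : ℕ) (l : List ℤ) : ℕ → ℤ := fun i => if i ∈ Finset.Icc 1 n then l.getD (i-1) 0 else 0

lemma nodup_baseL (n : ℕ) : (baseL n).Nodup := by
  apply List.Nodup.map_on _ (List.nodup_range)
  intro i _ j _ h
  omega

lemma dsc_filter : ∀ l : List ℤ,
    dsc l = ((range (l.length - 1)).filter (fun i => l.getD (i+1) 0 < l.getD i 0)).card := by
  intro l
  match l with
  | [] => rfl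
  | [a] => rfl
  | a :: b :: t =>
    show (if b < a then 1 else 0) + dsc (b :: t) = _
    have hlen : (a :: b :: t).length - 1 = t.length + 1 := by simp
    rw [hlen, card_filter_succ']
    have h0 : (a :: b :: t).getD 1 0 = b := rfl
    have h00 : (a :: b :: t).getD 0 0 = a := rfl
    have hsh : ∀ i : ℕ, (a :: b :: t).getD (i+1+1) 0 = (b :: t).getD (i+1) 0 := fun i => rfl
    have hsh2 : ∀ i : ℕ, (a :: b :: t).getD (i+1) 0 = (b :: t).getD i 0 := fun i => rfl
    have heq : ((range (t.length)).filter (fun i => (a :: b :: t).getD (i+1+1) 0 < (a :: b :: t).getD (i+1) 0))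
        = ((range ((b :: t).length - 1)).filter (fun i => (b :: t).getD (i+1) 0 < (b :: t).getD i 0)) := by
      have : (b :: t).length - 1 = t.length := by simp
      rw [this]
      apply Finset.filter_congr
      intro i _
      rw [hsh i, hsh2 i]
    rw [heq, ← dsc_filter (b :: t), h0, h00]
    omega

lemma wordOf_spec {n : ℕ} {l : List ℤ} (hp : l.Perm (baseL n)) :
    IsPermWord n (wordOf n l) ∧ descA n (wordOf n l) = dsc l ∧ listOf n (wordOf n l) = l := by
  have hlen : l.length = n := by rw [hp.length_eq, length_baseL]
  have hnodup : l.Nodup := hp.nodup_iff.mpr (nodup_baseL n)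
  have helem : ∀ y ∈ l, 1 ≤ y ∧ y ≤ (n:ℤ) := fun y hy => mem_baseL.mp (hp.mem_iff.mp hy)
  have hval : ∀ i, i ∈ Finset.Icc 1 n → wordOf n l i = l.getD (i-1) 0 := by
    intro i hi; rw [wordOf, if_pos hi]
  have hget : ∀ i, i ∈ Finset.Icc 1 n → ∃ h : i - 1 < l.length, wordOf n l i = l[i-1] := by
    intro i hi
    rw [Finset.mem_Icc] at hi
    have h : i - 1 < l.length := by omega
    exact ⟨h, by rw [hval i (Finset.mem_Icc.mpr hi), List.getD_eq_getElem l 0 h]⟩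
  have hpos : ∀ i ∈ Finset.Icc 1 n, 0 < wordOf n l i := by
    intro i hi
    obtain ⟨h, he⟩ := hget i hi
    rw [he]
    have := helem _ (List.getElem_mem h)
    omega
  have hbnd : ∀ i ∈ Finset.Icc 1 n, 1 ≤ |wordOf n l i| ∧ |wordOf n l i| ≤ (n:ℤ) := by
    intro i hi
    obtain ⟨h, he⟩ := hget i hi
    rw [he]
    have h1 := helem _ (List.getElem_mem h)
    rw [abs_of_pos (by omega)]
    exact h1
  have hinj : ∀ i ∈ Finset.Icc 1 n, ∀ j ∈ Finset.Icc 1 n, |wordOf n l i| = |wordOf n l j| → i = j := by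
    intro i hi j hj habs
    obtain ⟨h1, he1⟩ := hget i hi
    obtain ⟨h2, he2⟩ := hget j hj
    rw [he1, he2] at habs
    rw [abs_of_pos (by have := helem _ (List.getElem_mem h1); omega),
      abs_of_pos (by have := helem _ (List.getElem_mem h2); omega)] at habs
    have := (hnodup.getElem_inj_iff).mp habs
    rw [Finset.mem_Icc] at hi hj
    omega
  have hzero : ∀ i, i ∉ Finset.Icc 1 n → wordOf n l i = 0 := by
    intro i hi; rw [wordOf, if_neg hi]
  have hIPW : IsPermWord n (wordOf n l) := ⟨⟨hbnd, hinj, hzero⟩, hpos⟩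
  refine ⟨hIPW, ?_, ?_⟩
  · -- descA = dsc
    rw [descA, dsc_filter l, hlen]
    refine Finset.card_nbij' (fun i => i - 1) (fun j => j + 1) ?_ ?_ ?_ ?_
    · intro i hi
      rw [Finset.mem_coe, Finset.mem_filter, Finset.mem_Icc] at hi
      obtain ⟨⟨hi1, hi2⟩, hlt⟩ := hi
      dsimp only
      rw [Finset.mem_coe, Finset.mem_filter, Finset.mem_range]
      refine ⟨by omega, ?_⟩
      have e1 : wordOf n l (i+1) = l.getD i 0 := by
        rw [hval (i+1) (Finset.mem_Icc.mpr (by omega))]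
        congr 1
      have e2 : wordOf n l i = l.getD (i-1) 0 := hval i (Finset.mem_Icc.mpr (by omega))
      rw [e1, e2] at hlt
      have h3 : i - 1 + 1 = i := by omega
      rw [h3]
      exact hlt
    · intro j hj
      rw [Finset.mem_coe, Finset.mem_filter, Finset.mem_range] at hj
      obtain ⟨hj1, hlt⟩ := hj
      dsimp only
      rw [Finset.mem_coe, Finset.mem_filter, Finset.mem_Icc]
      refine ⟨by omega, ?_⟩
      have e1 : wordOf n l (j+1+1) = l.getD (j+1) 0 := by
        rw [hval (j+1+1) (Finset.mem_Icc.mpr (by omega))]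
        congr 1
      have e2 : wordOf n l (j+1) = l.getD j 0 := by
        rw [hval (j+1) (Finset.mem_Icc.mpr (by omega))]
        congr 1
      rw [e1, e2]
      exact hlt
    · intro i hi
      rw [Finset.mem_coe, Finset.mem_filter, Finset.mem_Icc] at hi
      dsimp only
      omega
    · intro j _
      dsimp only
      omega
  · -- listOf (wordOf) = l
    apply List.ext_getElem
    · simp only [listOf, List.length_map, List.length_range, hlen]
    · intro i h1 h2
      simp only [listOf, List.getElem_map, List.getElem_range]
      obtain ⟨h, he⟩ := hget (i+1) (Finset.mem_Icc.mpr (by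
        simp only [listOf, List.length_map, List.length_range] at h1
        omega))
      rw [he]
      congr 1

lemma listOf_spec {n : ℕ} {w : ℕ → ℤ} (hw : IsPermWord n w) :
    (listOf n w).Perm (baseL n) ∧ wordOf n (listOf n w) = w := by
  obtain ⟨⟨hbnd, hinj, hzero⟩, hpos⟩ := hw
  have hlen : (listOf n w).length = n := by simp only [listOf, List.length_map, List.length_range]
  have hval : ∀ i (h : i < n), (listOf n w)[i]'(by omega) = w (i+1) := by
    intro i h
    simp only [listOf, List.getElem_map, List.getElem_range]
  have hnd : (listOf n w).Nodup := by
    apply List.Nodup.map_on _ (List.nodup_range)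
    intro i hi j hj h
    rw [List.mem_range] at hi hj
    have hmi : i + 1 ∈ Finset.Icc 1 n := Finset.mem_Icc.mpr (by omega)
    have hmj : j + 1 ∈ Finset.Icc 1 n := Finset.mem_Icc.mpr (by omega)
    have := hinj (i+1) hmi (j+1) hmj (by rw [h])
    omega
  have hsub : listOf n w ⊆ baseL n := by
    intro y hy
    simp only [listOf, List.mem_map] at hy
    obtain ⟨i, hi, rfl⟩ := hy
    rw [List.mem_range] at hi
    have hmi : i + 1 ∈ Finset.Icc 1 n := Finset.mem_Icc.mpr (by omega)
    have h1 := hbnd (i+1) hmi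
    have h2 := hpos (i+1) hmi
    rw [abs_of_pos h2] at h1
    exact mem_baseL.mpr h1
  have hperm : (listOf n w).Perm (baseL n) := by
    apply (List.Nodup.subperm hnd hsub).perm_of_length_le
    rw [hlen, length_baseL]
  refine ⟨hperm, ?_⟩
  funext i
  by_cases hi : i ∈ Finset.Icc 1 n
  · rw [wordOf, if_pos hi]
    rw [Finset.mem_Icc] at hi
    have h : i - 1 < (listOf n w).length := by omega
    rw [List.getD_eq_getElem _ 0 h, hval (i-1) (by omega)]
    congr 1
    omega
  · rw [wordOf, if_neg hi, hzero i hi]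

lemma eulA_eq_card_s2 (n k : ℕ) : eulA n k = ((permsF n).filter (fun l => dsc l = k)).card := by
  rw [eulA]
  have hset : {w : ℕ → ℤ | IsPermWord n w ∧ descA n w = k}
      = (wordOf n) '' ↑((permsF n).filter (fun l => dsc l = k)) := by
    ext w
    simp only [Set.mem_setOf_eq, Set.mem_image, Finset.mem_coe, Finset.mem_filter]
    constructor
    · rintro ⟨hw, hd⟩
      obtain ⟨hperm, heq⟩ := listOf_spec hw
      refine ⟨listOf n w, ⟨mem_permsF.mpr hperm, ?_⟩, heq⟩
      obtain ⟨_, hdsc, _⟩ := wordOf_spec hperm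
      rw [← hdsc, heq, hd]
    · rintro ⟨l, ⟨hl, hd⟩, rfl⟩
      obtain ⟨hipw, hdsc, _⟩ := wordOf_spec (mem_permsF.mp hl)
      exact ⟨hipw, by rw [hdsc, hd]⟩
  rw [hset, Set.ncard_image_of_injOn, Set.ncard_coe_finset]
  intro l1 h1 l2 h2 he
  rw [Finset.mem_coe, Finset.mem_filter] at h1 h2
  obtain ⟨_, _, hl1⟩ := wordOf_spec (mem_permsF.mp h1.1)
  obtain ⟨_, _, hl2⟩ := wordOf_spec (mem_permsF.mp h2.1)
  rw [← hl1, ← hl2, he]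

end EulerianAux

/-- `2^n · A(n,k) = Σ_{i=0}^{2k+1} A(n,i) · C(n+1, 2k+1−i)` for `n ≥ 1`, `0 ≤ k ≤ n−1`. -/
theorem two_pow_mul_eulA_eq_sum (n k : ℕ) (hn : 1 ≤ n) (hk : k ≤ n - 1) :
    2 ^ n * eulA n k =
      ∑ i ∈ Finset.range (2 * k + 2), eulA n i * Nat.choose (n + 1) (2 * k + 1 - i) := by
  have hA : ∀ m, eulA n m = eulRec n m := fun m => by rw [eulA_eq_card_s2, count_lemma]
  have hZ := key_numeric n k (by omega : k ≤ n + 1)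
  rw [← eulRec_eq_eulG] at hZ
  have hcast : ((2 ^ n * eulA n k : ℕ) : ℤ)
      = ((∑ i ∈ Finset.range (2 * k + 2), eulA n i * Nat.choose (n + 1) (2 * k + 1 - i) : ℕ) : ℤ) := by
    push_cast
    simp only [hA]
    exact hZ
  exact Nat.cast_injective hcast
end

section
/- For all n ≥ 2 and 0 ≤ k ≤ n, the type D Eulerian numbers satisfy Stembridge's identity: D(n,k) = B(n,k) − n·2^{n−1}·A(n−1,k−1) (where A(n−1,−1) := 0). -/
/-! ### Auxiliary material for the proof -/

open Finset

namespace StembridgeAux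

variable {n : ℕ} {u : ℕ → ℤ}

lemma u_zero_outside (hu : IsSignedPerm n u) {i : ℕ} (h : i ∉ Finset.Icc 1 n) : u i = 0 :=
  hu.2.2 i h

lemma u_zero (hu : IsSignedPerm n u) : u 0 = 0 := by
  apply u_zero_outside hu; simp

lemma u_ne_zero (hu : IsSignedPerm n u) {i : ℕ} (hi : i ∈ Finset.Icc 1 n) : u i ≠ 0 := by
  have := (hu.1 i hi).1
  intro h; rw [h] at this; simp at this

lemma u_injOn (hu : IsSignedPerm n u) {i j : ℕ} (hi : i ∈ Finset.Icc 1 n)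
    (hj : j ∈ Finset.Icc 1 n) (h : u i = u j) : i = j :=
  hu.2.1 i hi j hj (by rw [h])

lemma abs_surj (hu : IsSignedPerm n u) {v : ℕ} (hv : v ∈ Finset.Icc 1 n) :
    ∃ i ∈ Finset.Icc 1 n, |u i| = (v : ℤ) := by
  classical
  have habs : ∀ i ∈ Finset.Icc 1 n, |u i| = ((u i).natAbs : ℤ) := fun i _ => (Int.abs_eq_natAbs _)
  have himg : (Finset.Icc 1 n).image (fun i => (u i).natAbs) ⊆ Finset.Icc 1 n := by
    intro x hx
    simp only [Finset.mem_image] at hx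
    obtain ⟨i, hi, rfl⟩ := hx
    have h1 := (hu.1 i hi).1
    have h2 := (hu.1 i hi).2
    rw [habs i hi] at h1 h2
    simp only [Finset.mem_Icc]
    omega
  have hcard : ((Finset.Icc 1 n).image (fun i => (u i).natAbs)).card = (Finset.Icc 1 n).card := by
    apply Finset.card_image_of_injOn
    intro i hi j hj h
    simp only [Finset.mem_coe] at hi hj
    apply hu.2.1 i hi j hj
    rw [habs i hi, habs j hj]
    exact_mod_cast congrArg (Nat.cast (R := ℤ)) h
  have heq : (Finset.Icc 1 n).image (fun i => (u i).natAbs) = Finset.Icc 1 n :=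
    Finset.eq_of_subset_of_card_le himg (le_of_eq hcard.symm)
  have hv' : v ∈ (Finset.Icc 1 n).image (fun i => (u i).natAbs) := by rw [heq]; exact hv
  simp only [Finset.mem_image] at hv'
  obtain ⟨i, hi, h⟩ := hv'
  exact ⟨i, hi, by rw [habs i hi, h]⟩

/-- The set of signed permutations is finite. -/
lemma finite_signedPerm (n : ℕ) : {u : ℕ → ℤ | IsSignedPerm n u}.Finite := by
  classical
  have hfin : ({g : {i // i ∈ Finset.Icc 1 n} → ℤ | ∀ i, g i ∈ Set.Icc (-(n:ℤ)) n}).Finite := by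
    have := Set.Finite.pi (fun _ : {i // i ∈ Finset.Icc 1 n} => Set.finite_Icc (-(n:ℤ)) n)
    refine this.subset ?_
    intro g hg
    simp only [Set.mem_pi, Set.mem_univ, forall_true_left]
    exact fun i => hg i
  apply Set.Finite.of_finite_image (f := fun (u : ℕ → ℤ) (i : {i // i ∈ Finset.Icc 1 n}) => u i.1)
  · refine hfin.subset ?_
    rintro g ⟨u, hu, rfl⟩
    intro i
    have h1 := (hu.1 i.1 i.2).1
    have h2 := (hu.1 i.1 i.2).2
    have h3 := abs_nonneg (u i.1)
    have h4 := le_abs_self (u i.1)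
    have h5 := neg_abs_le (u i.1)
    simp only [Set.mem_Icc]
    constructor <;> omega
  · intro u hu v hv h
    funext i
    by_cases hi : i ∈ Finset.Icc 1 n
    · exact congrFun h ⟨i, hi⟩
    · rw [u_zero_outside hu hi, u_zero_outside hv hi]

open scoped Classical in
/-- Signed permutations as a `Finset`. -/
noncomputable def SPF (n : ℕ) : Finset (ℕ → ℤ) := (finite_signedPerm n).toFinset

lemma mem_SPF {n : ℕ} {u : ℕ → ℤ} : u ∈ SPF n ↔ IsSignedPerm n u :=
  (finite_signedPerm n).mem_toFinset

lemma ncard_eq_card_filter (n : ℕ) (P : (ℕ → ℤ) → Prop) [DecidablePred P] :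
    {u : ℕ → ℤ | IsSignedPerm n u ∧ P u}.ncard = ((SPF n).filter P).card := by
  rw [← Set.ncard_coe_finset]
  congr 1
  ext u
  simp [mem_SPF]

/-! ### The first-letter negation involution -/

/-- Negate the first letter of a signed permutation. -/
def nu (u : ℕ → ℤ) : ℕ → ℤ := fun i => if i = 1 then -u 1 else u i

@[simp] lemma nu_one (u : ℕ → ℤ) : nu u 1 = -u 1 := by simp [nu]

lemma nu_ne_one (u : ℕ → ℤ) {i : ℕ} (h : i ≠ 1) : nu u i = u i := by simp [nu, h]

@[simp] lemma nu_nu (u : ℕ → ℤ) : nu (nu u) = u := by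
  funext i
  by_cases h : i = 1 <;> simp [nu, h]

lemma nu_isSignedPerm (hn : 1 ≤ n) (hu : IsSignedPerm n u) : IsSignedPerm n (nu u) := by
  have habs : ∀ i, |nu u i| = |u i| := by
    intro i; by_cases h : i = 1 <;> simp [nu, h]
  refine ⟨fun i hi => by rw [habs]; exact hu.1 i hi,
    fun i hi j hj h => hu.2.1 i hi j hj (by rwa [habs, habs] at h),
    fun i hi => ?_⟩
  have h1 : i ≠ 1 := by rintro rfl; exact hi (by simp [Finset.mem_Icc]; omega)
  rw [nu_ne_one u h1]; exact hu.2.2 i hi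

lemma one_mem_Icc (hn : 1 ≤ n) : (1 : ℕ) ∈ Finset.Icc 1 n := by simp [Finset.mem_Icc]; omega

lemma two_mem_Icc (hn : 2 ≤ n) : (2 : ℕ) ∈ Finset.Icc 1 n := by simp [Finset.mem_Icc]; omega

lemma abs_ne (hn : 2 ≤ n) (hu : IsSignedPerm n u) : |u 1| ≠ |u 2| := by
  intro h
  have := hu.2.1 1 (one_mem_Icc (by omega)) 2 (two_mem_Icc hn) h
  omega

lemma nu_evenSigned (hn : 1 ≤ n) (hu : IsSignedPerm n u) :
    IsEvenSigned n (nu u) ↔ ¬ IsEvenSigned n u := by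
  classical
  unfold IsEvenSigned
  have h1 : (1:ℕ) ∈ Finset.Icc 1 n := one_mem_Icc hn
  have hne : u 1 ≠ 0 := u_ne_zero hu h1
  by_cases h : u 1 < 0
  · have hF : (Finset.Icc 1 n).filter (fun i => nu u i < 0) =
        ((Finset.Icc 1 n).filter (fun i => u i < 0)).erase 1 := by
      ext i
      simp only [Finset.mem_filter, Finset.mem_erase]
      by_cases hi : i = 1
      · subst hi; simp [nu_one]; omega
      · rw [nu_ne_one u hi]; tauto
    have h1mem : (1:ℕ) ∈ (Finset.Icc 1 n).filter (fun i => u i < 0) := by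
      simp [Finset.mem_filter, h1, h]
    rw [hF, Finset.card_erase_of_mem h1mem]
    have hc : 1 ≤ ((Finset.Icc 1 n).filter (fun i => u i < 0)).card :=
      Finset.card_pos.mpr ⟨1, h1mem⟩
    rw [Nat.even_sub hc]
    simp [Nat.not_even_one]
  · have hpos : 0 < u 1 := by omega
    have hF : (Finset.Icc 1 n).filter (fun i => nu u i < 0) =
        insert 1 ((Finset.Icc 1 n).filter (fun i => u i < 0)) := by
      ext i
      simp only [Finset.mem_filter, Finset.mem_insert]
      by_cases hi : i = 1
      · subst hi; simp [nu_one, h1]; omega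
      · rw [nu_ne_one u hi]; tauto
    have h1mem : (1:ℕ) ∉ (Finset.Icc 1 n).filter (fun i => u i < 0) := by
      simp [Finset.mem_filter]; omega
    rw [hF, Finset.card_insert_of_notMem h1mem, Nat.even_add_one]

lemma nu_descD (hn : 2 ≤ n) (hu : IsSignedPerm n u) : descD n (nu u) = descD n u := by
  classical
  unfold descD
  have e2 : nu u 2 = u 2 := nu_ne_one u (by norm_num)
  set f : ℕ → ℕ := fun i => if i = 0 then 1 else if i = 1 then 0 else i with hf
  have hff : ∀ i, f (f i) = i := by
    intro i
    by_cases h0 : i = 0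
    · simp [hf, h0]
    · by_cases h1 : i = 1 <;> simp [hf, h0, h1]
  have hfr : ∀ i, i < n → f i < n := by
    intro i hi
    by_cases h0 : i = 0
    · simp [hf, h0]; omega
    · by_cases h1 : i = 1 <;> simp [hf, h0, h1] <;> omega
  have key : ∀ i, i < n →
      ((nu u (i + 1) < (if i = 0 then -(nu u 2) else nu u i)) ↔
       (u (f i + 1) < (if f i = 0 then -(u 2) else u (f i)))) := by
    intro i hi
    by_cases h0 : i = 0
    · subst h0
      have hfi : f 0 = 1 := by simp [hf]
      rw [hfi]
      norm_num [e2, nu_one]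
      try omega
    · by_cases h1 : i = 1
      · subst h1
        have hfi : f 1 = 0 := by simp [hf]
        rw [hfi]
        norm_num [e2, nu_one]
        try omega
      · have hfi : f i = i := by simp [hf, h0, h1]
        rw [hfi, nu_ne_one u h1, nu_ne_one u (by omega : i + 1 ≠ 1), if_neg h0, if_neg h0]
  refine Finset.card_nbij' f f ?_ ?_ ?_ ?_
  · intro i hi
    simp only [Finset.mem_coe, Finset.mem_filter, Finset.mem_range] at hi ⊢
    exact ⟨hfr i hi.1, (key i hi.1).mp hi.2⟩
  · intro i hi
    simp only [Finset.mem_coe, Finset.mem_filter, Finset.mem_range] at hi ⊢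
    refine ⟨hfr i hi.1, ?_⟩
    have := (key (f i) (hfr i hi.1)).mpr
    rw [hff i] at this
    exact this hi.2
  · intro i _; exact hff i
  · intro i _; exact hff i

/-- Number of "internal" descents: at positions `2 ≤ i ≤ n-1`. -/
def rstat (n : ℕ) (u : ℕ → ℤ) : ℕ :=
  ((Finset.Ico 2 n).filter (fun i => u (i + 1) < u i)).card

lemma nu_rstat (u : ℕ → ℤ) : rstat n (nu u) = rstat n u := by
  classical
  unfold rstat
  congr 1
  apply Finset.filter_congr
  intro i hi
  simp only [Finset.mem_Ico] at hi
  rw [nu_ne_one u (by omega : i + 1 ≠ 1), nu_ne_one u (by omega : i ≠ 1)]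

lemma range_split (hn : 2 ≤ n) : Finset.range n = insert 0 (insert 1 (Finset.Ico 2 n)) := by
  ext i
  simp only [Finset.mem_range, Finset.mem_insert, Finset.mem_Ico]
  omega

lemma descB_split (hn : 2 ≤ n) (hu0 : u 0 = 0) :
    descB n u = (if u 1 < 0 then 1 else 0) + (if u 2 < u 1 then 1 else 0) + rstat n u := by
  classical
  unfold descB rstat
  rw [range_split hn, Finset.filter_insert, Finset.filter_insert]
  have h0 : (0:ℕ) ∉ insert 1 (Finset.Ico 2 n) := by simp
  have h0' : (0:ℕ) ∉ ((Finset.Ico 2 n).filter (fun i => u (i+1) < u i)) := by simp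
  have h0'' : ∀ s : Finset ℕ, s ⊆ insert 1 (Finset.Ico 2 n) → (0:ℕ) ∉ s :=
    fun s hs h => h0 (hs h)
  have h1 : (1:ℕ) ∉ ((Finset.Ico 2 n).filter (fun i => u (i+1) < u i)) := by simp
  rw [hu0]
  by_cases ha : u 1 < 0 <;> by_cases hb : u 2 < u 1 <;>
    simp only [ha, hb, if_pos, if_neg, not_false_iff, zero_add] <;>
    first
      | (rw [Finset.card_insert_of_notMem (by simp [Finset.mem_insert, Finset.mem_filter]),
          Finset.card_insert_of_notMem h1]; ring)
      | (try rw [Finset.card_insert_of_notMem (by simp [Finset.mem_insert, Finset.mem_filter])]) <;>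
        (try rw [Finset.card_insert_of_notMem h1]) <;> ring

lemma descD_split (hn : 2 ≤ n) :
    descD n u = (if u 1 < -u 2 then 1 else 0) + (if u 2 < u 1 then 1 else 0) + rstat n u := by
  classical
  unfold descD rstat
  rw [range_split hn, Finset.filter_insert, Finset.filter_insert]
  have h1 : (1:ℕ) ∉ ((Finset.Ico 2 n).filter (fun i => u (i+1) < if i = 0 then -(u 2) else u i)) := by
    simp
  have hcongr : (Finset.Ico 2 n).filter (fun i => u (i+1) < if i = 0 then -(u 2) else u i)
      = (Finset.Ico 2 n).filter (fun i => u (i+1) < u i) := by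
    apply Finset.filter_congr
    intro i hi
    simp only [Finset.mem_Ico] at hi
    rw [if_neg (by omega)]
  simp only [if_pos rfl, if_neg (by omega : (1:ℕ) ≠ 0), hcongr] at *
  by_cases ha : u 1 < -u 2 <;> by_cases hb : u 2 < u 1 <;>
    simp only [ha, hb, if_pos, if_neg, not_false_iff, zero_add] <;>
    first
      | (rw [Finset.card_insert_of_notMem (by simp [Finset.mem_insert, Finset.mem_filter]),
          Finset.card_insert_of_notMem h1]; ring)
      | (try rw [Finset.card_insert_of_notMem (by simp [Finset.mem_insert, Finset.mem_filter])]) <;>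
        (try rw [Finset.card_insert_of_notMem h1]) <;> ring

/-! ### Pointwise descent identity and the two counting claims -/

lemma pointwise (hn : 2 ≤ n) (hu : IsSignedPerm n u) (h1 : 0 < u 1) (k : ℕ) :
    ((if descB n u = k then 1 else 0) + (if descB n (nu u) = k then 1 else 0) : ℕ) =
    (if descD n u = k then 1 else 0) + (if k ≠ 0 ∧ rstat n u = k - 1 then 1 else 0) := by
  classical
  have hu0 : u 0 = 0 := u_zero hu
  have hnu : IsSignedPerm n (nu u) := nu_isSignedPerm (by omega) hu
  have hnu0 : nu u 0 = 0 := u_zero hnu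
  have habs : |u 1| ≠ |u 2| := abs_ne hn hu
  have h21 : u 2 ≠ u 1 := by intro h; rw [h] at habs; simp at habs
  have h22 : u 2 ≠ -u 1 := by
    intro h; rw [h] at habs; rw [abs_neg] at habs; simp at habs
  rw [descB_split hn hu0, descB_split hn hnu0, descD_split hn, nu_rstat u,
    nu_one, nu_ne_one u (by norm_num : (2:ℕ) ≠ 1)]
  split_ifs <;> omega

lemma key1 : ∀ {A B C D E : ℕ}, A = B → C = D → A + B = E → C + D = E → A = C := by
  intros; omega

lemma key2 : ∀ {A B C D E X : ℕ}, A + B = C → D = B → A + D = E + X → C = E + X := by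
  intros; omega

lemma nu_card_eq (s t : Finset (ℕ → ℤ)) (hst : ∀ u ∈ s, nu u ∈ t)
    (hts : ∀ u ∈ t, nu u ∈ s) : s.card = t.card :=
  Finset.card_nbij' nu nu (fun u hu => hst u hu) (fun u hu => hts u hu)
    (fun u _ => nu_nu u) (fun u _ => nu_nu u)

lemma filter_split_card (s : Finset (ℕ → ℤ)) (p q : (ℕ → ℤ) → Prop)
    [DecidablePred p] [DecidablePred q] :
    (s.filter (fun u => p u ∧ q u)).card + (s.filter (fun u => ¬ p u ∧ q u)).card
      = (s.filter q).card := by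
  classical
  have h1 : s.filter (fun u => p u ∧ q u) = (s.filter q).filter p := by
    rw [Finset.filter_filter]
    exact Finset.filter_congr (fun u _ => by tauto)
  have h2 : s.filter (fun u => ¬ p u ∧ q u) = (s.filter q).filter (fun u => ¬ p u) := by
    rw [Finset.filter_filter]
    exact Finset.filter_congr (fun u _ => by tauto)
  rw [h1, h2, Finset.card_filter_add_card_filter_not]

open scoped Classical in
lemma claimA (hn : 2 ≤ n) (k : ℕ) :
    ((SPF n).filter (fun u => IsEvenSigned n u ∧ descD n u = k)).card =
    ((SPF n).filter (fun u => 0 < u 1 ∧ descD n u = k)).card := by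
  have he : ((SPF n).filter (fun u => IsEvenSigned n u ∧ descD n u = k)).card =
      ((SPF n).filter (fun u => ¬ IsEvenSigned n u ∧ descD n u = k)).card := by
    apply nu_card_eq <;>
    · intro u hu
      simp only [Finset.mem_filter, mem_SPF] at hu ⊢
      obtain ⟨hs, ha, hb⟩ := hu
      have hiff := nu_evenSigned (by omega : 1 ≤ n) hs
      refine ⟨nu_isSignedPerm (by omega) hs, ?_, by rw [nu_descD hn hs]; exact hb⟩
      first
        | exact fun hc => (hiff.mp hc) ha
        | exact hiff.mpr ha
  have hp : ((SPF n).filter (fun u => 0 < u 1 ∧ descD n u = k)).card =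
      ((SPF n).filter (fun u => ¬ 0 < u 1 ∧ descD n u = k)).card := by
    apply nu_card_eq <;>
    · intro u hu
      simp only [Finset.mem_filter, mem_SPF] at hu ⊢
      obtain ⟨hs, ha, hb⟩ := hu
      have hne := u_ne_zero hs (one_mem_Icc (by omega : 1 ≤ n))
      refine ⟨nu_isSignedPerm (by omega) hs, ?_, by rw [nu_descD hn hs]; exact hb⟩
      rw [nu_one]
      omega
  have hsum1 := filter_split_card (SPF n) (fun u => IsEvenSigned n u) (fun u => descD n u = k)
  have hsum2 := filter_split_card (SPF n) (fun u => 0 < u 1) (fun u => descD n u = k)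
  exact key1 he hp hsum1 hsum2

open scoped Classical in
lemma claimB (hn : 2 ≤ n) (k : ℕ) :
    ((SPF n).filter (fun u => descB n u = k)).card =
    ((SPF n).filter (fun u => 0 < u 1 ∧ descD n u = k)).card +
    (if k = 0 then 0 else ((SPF n).filter (fun u => 0 < u 1 ∧ rstat n u = k - 1)).card) := by
  have hsplit := filter_split_card (SPF n) (fun u => 0 < u 1) (fun u => descB n u = k)
  have hneg : ((SPF n).filter (fun u => 0 < u 1 ∧ descB n (nu u) = k)).card =
      ((SPF n).filter (fun u => ¬ 0 < u 1 ∧ descB n u = k)).card := by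
    apply nu_card_eq
    · intro u hu
      simp only [Finset.mem_filter, mem_SPF] at hu ⊢
      obtain ⟨hs, ha, hb⟩ := hu
      refine ⟨nu_isSignedPerm (le_trans one_le_two hn) hs, ?_, hb⟩
      rw [nu_one]
      exact not_lt.mpr (neg_nonpos.mpr ha.le)
    · intro u hu
      simp only [Finset.mem_filter, mem_SPF] at hu ⊢
      obtain ⟨hs, ha, hb⟩ := hu
      have hne := u_ne_zero hs (one_mem_Icc (le_trans one_le_two hn))
      refine ⟨nu_isSignedPerm (le_trans one_le_two hn) hs, ?_, ?_⟩
      · rw [nu_one]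
        exact neg_pos.mpr (lt_of_le_of_ne (not_lt.mp ha) hne)
      · rw [nu_nu]
        exact hb
  have hmain : ((SPF n).filter (fun u => 0 < u 1 ∧ descB n u = k)).card +
      ((SPF n).filter (fun u => 0 < u 1 ∧ descB n (nu u) = k)).card =
      ((SPF n).filter (fun u => 0 < u 1 ∧ descD n u = k)).card +
      ((SPF n).filter (fun u => 0 < u 1 ∧ (k ≠ 0 ∧ rstat n u = k - 1))).card := by
    rw [Finset.card_filter, Finset.card_filter, Finset.card_filter, Finset.card_filter,
      ← Finset.sum_add_distrib, ← Finset.sum_add_distrib]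
    apply Finset.sum_congr rfl
    intro u hu
    rw [mem_SPF] at hu
    by_cases h1 : 0 < u 1
    · simp only [h1, true_and]
      exact pointwise hn hu h1 k
    · simp [h1]
  have hlast : ((SPF n).filter (fun u => 0 < u 1 ∧ (k ≠ 0 ∧ rstat n u = k - 1))).card =
      (if k = 0 then 0 else ((SPF n).filter (fun u => 0 < u 1 ∧ rstat n u = k - 1)).card) := by
    by_cases hk : k = 0
    · subst hk
      rw [if_pos rfl]
      convert Finset.card_empty
      apply Finset.filter_false_of_mem
      intro u _
      simp
    · rw [if_neg hk]
      congr 1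
      exact Finset.filter_congr (fun u _ => by tauto)
  rw [← hlast]
  exact key2 hsplit hneg hmain

/-! ### Signed value sets and sorted enumeration -/

/-- Sign a value according to membership in `N`. -/
def sgn (N : Finset ℕ) (v : ℕ) : ℤ := if v ∈ N then -(v:ℤ) else (v:ℤ)

open scoped Classical in
/-- The set of signed values `{±v : v ∈ {1,...,n} \ {m}}` with signs given by `N`. -/
noncomputable def sset (n m : ℕ) (N : Finset ℕ) : Finset ℤ :=
  ((Finset.Icc 1 n).erase m).image (sgn N)

lemma abs_sgn (N : Finset ℕ) (v : ℕ) : |sgn N v| = (v:ℤ) := by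
  unfold sgn
  split_ifs <;> simp

lemma sset_card {m : ℕ} {N : Finset ℕ} (hm : m ∈ Finset.Icc 1 n) :
    (sset n m N).card = n - 1 := by
  classical
  unfold sset
  have hinj : Set.InjOn (sgn N) ((Finset.Icc 1 n).erase m) := by
    intro v _ v' _ h
    have h2 := abs_sgn N v
    rw [h, abs_sgn] at h2
    exact_mod_cast h2.symm
  rw [Finset.card_image_of_injOn hinj, Finset.card_erase_of_mem hm, Nat.card_Icc]
  omega

lemma sset_spec {m : ℕ} {N : Finset ℕ} (hN : N ⊆ (Finset.Icc 1 n).erase m) {x : ℤ}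
    (hx : x ∈ sset n m N) :
    ∃ v : ℕ, v ∈ (Finset.Icc 1 n).erase m ∧ |x| = (v:ℤ) ∧ (x < 0 ↔ v ∈ N) := by
  classical
  unfold sset at hx
  rw [Finset.mem_image] at hx
  obtain ⟨v, hv, rfl⟩ := hx
  refine ⟨v, hv, abs_sgn N v, ?_⟩
  have hv1 : 1 ≤ v := by
    have := Finset.mem_of_mem_erase hv
    rw [Finset.mem_Icc] at this
    omega
  unfold sgn
  by_cases h : v ∈ N
  · rw [if_pos h]
    simp only [h, iff_true]
    omega
  · rw [if_neg h]
    simp only [h, iff_false]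
    omega

lemma sset_abs_inj {m : ℕ} {N : Finset ℕ} (hN : N ⊆ (Finset.Icc 1 n).erase m) {x y : ℤ}
    (hx : x ∈ sset n m N) (hy : y ∈ sset n m N) (h : |x| = |y|) : x = y := by
  obtain ⟨v, hv, hxv, hxs⟩ := sset_spec hN hx
  obtain ⟨v', hv', hyv, hys⟩ := sset_spec hN hy
  have hvv : v = v' := by
    rw [hxv, hyv] at h
    exact_mod_cast h
  subst hvv
  have h1 : 1 ≤ v := by
    have := Finset.mem_of_mem_erase hv
    rw [Finset.mem_Icc] at this
    omega
  by_cases hvN : v ∈ N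
  · have hx0 : x < 0 := hxs.mpr hvN
    have hy0 : y < 0 := hys.mpr hvN
    rw [abs_of_neg hx0] at hxv
    rw [abs_of_neg hy0] at hyv
    omega
  · have hx0 : ¬ x < 0 := fun h' => hvN (hxs.mp h')
    have hy0 : ¬ y < 0 := fun h' => hvN (hys.mp h')
    rw [abs_of_nonneg (by omega)] at hxv
    rw [abs_of_nonneg (by omega)] at hyv
    omega

lemma sset_mem_of_mem_N {m : ℕ} {N : Finset ℕ} (hN : N ⊆ (Finset.Icc 1 n).erase m) {v : ℕ}
    (hv : v ∈ N) : -(v:ℤ) ∈ sset n m N := by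
  classical
  unfold sset
  rw [Finset.mem_image]
  exact ⟨v, hN hv, by unfold sgn; rw [if_pos hv]⟩

/-! ### Rank lemmas for the sorted enumeration -/

open scoped Classical in
lemma orderIso_rank {T : Finset ℤ} {c : ℕ} (h : T.card = c) {x : ℤ} (hx : x ∈ T) :
    (((T.orderIsoOfFin h).symm ⟨x, hx⟩ : Fin c) : ℕ) = (T.filter (fun y => y < x)).card := by
  set t := T.orderIsoOfFin h with ht
  set a := t.symm ⟨x, hx⟩ with ha
  have himg : T.filter (fun y => y < x) =
      (Finset.univ.filter (fun b : Fin c => b < a)).image (fun b => (t b : ℤ)) := by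
    ext y
    simp only [Finset.mem_filter, Finset.mem_image, Finset.mem_univ, true_and]
    constructor
    · rintro ⟨hyT, hyx⟩
      refine ⟨t.symm ⟨y, hyT⟩, ?_, by rw [OrderIso.apply_symm_apply]⟩
      rw [ha, (t.symm).lt_iff_lt]
      exact Subtype.mk_lt_mk.mpr hyx
    · rintro ⟨b, hb, rfl⟩
      refine ⟨(t b).2, ?_⟩
      have : t b < t a := t.lt_iff_lt.mpr hb
      rw [ha, OrderIso.apply_symm_apply] at this
      exact Subtype.coe_lt_coe.mpr this
  rw [himg, Finset.card_image_of_injOn]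
  · have : Finset.univ.filter (fun b : Fin c => b < a) = Finset.Iio a := by
      ext b; simp
    rw [this, Fin.card_Iio]
  · intro b _ b' _ hbb
    exact t.injective (Subtype.coe_injective hbb)

open scoped Classical in
lemma orderIso_apply_of_rank {T : Finset ℤ} {c : ℕ} (h : T.card = c) {x : ℤ} (hx : x ∈ T)
    (hr : (T.filter (fun y => y < x)).card < c) :
    ((T.orderIsoOfFin h) ⟨(T.filter (fun y => y < x)).card, hr⟩ : ℤ) = x := by
  have hrank := orderIso_rank h hx
  have ha : (⟨(T.filter (fun y => y < x)).card, hr⟩ : Fin c) = (T.orderIsoOfFin h).symm ⟨x, hx⟩ :=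
    Fin.ext (by rw [hrank])
  rw [ha, OrderIso.apply_symm_apply]

open scoped Classical in
lemma rank_orderIso_apply {T : Finset ℤ} {c : ℕ} (h : T.card = c) (b : Fin c) :
    (T.filter (fun y => y < ((T.orderIsoOfFin h) b : ℤ))).card = (b : ℕ) := by
  have := orderIso_rank h ((T.orderIsoOfFin h) b).2
  rw [← this]
  congr 1
  rw [Subtype.coe_eta, OrderIso.symm_apply_apply]

/-! ### The `pick` function -/

open scoped Classical in
noncomputable def pick (c : ℕ) (T : Finset ℤ) (a : ℤ) : ℤ :=
  if h : T.card = c ∧ a.toNat - 1 < c then ((T.orderIsoOfFin h.1) ⟨a.toNat - 1, h.2⟩ : ℤ) else 0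

lemma pick_eq {c : ℕ} {T : Finset ℤ} {a : ℤ} (hc : T.card = c) (ha : a.toNat - 1 < c) :
    pick c T a = ((T.orderIsoOfFin hc) ⟨a.toNat - 1, ha⟩ : ℤ) := by
  unfold pick
  rw [dif_pos ⟨hc, ha⟩]

lemma pick_mem {c : ℕ} {T : Finset ℤ} {a : ℤ} (hc : T.card = c) (ha : a.toNat - 1 < c) :
    pick c T a ∈ T := by
  rw [pick_eq hc ha]
  exact ((T.orderIsoOfFin hc) ⟨a.toNat - 1, ha⟩).2

lemma pick_lt_pick {c : ℕ} {T : Finset ℤ} {a b : ℤ} (hc : T.card = c)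
    (ha1 : 1 ≤ a) (ha2 : a ≤ c) (hb1 : 1 ≤ b) (hb2 : b ≤ c) :
    (pick c T a < pick c T b ↔ a < b) := by
  have ha : a.toNat - 1 < c := by omega
  have hb : b.toNat - 1 < c := by omega
  rw [pick_eq hc ha, pick_eq hc hb, Subtype.coe_lt_coe, OrderIso.lt_iff_lt]
  rw [Fin.mk_lt_mk]
  omega

lemma pick_inj {c : ℕ} {T : Finset ℤ} {a b : ℤ} (hc : T.card = c)
    (ha1 : 1 ≤ a) (ha2 : a ≤ c) (hb1 : 1 ≤ b) (hb2 : b ≤ c)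
    (h : pick c T a = pick c T b) : a = b := by
  by_contra hne
  rcases lt_or_gt_of_ne hne with hlt | hgt
  · have := (pick_lt_pick hc ha1 ha2 hb1 hb2).mpr hlt
    omega
  · have := (pick_lt_pick hc hb1 hb2 ha1 ha2).mpr hgt
    omega

/-! ### Permutation words -/

lemma pw_bounds {m : ℕ} {w : ℕ → ℤ} (hw : IsSignedPerm m w)
    (hpos : ∀ i ∈ Finset.Icc 1 m, 0 < w i) {i : ℕ} (hi : i ∈ Finset.Icc 1 m) :
    1 ≤ w i ∧ w i ≤ (m:ℤ) := by
  have h1 := (hw.1 i hi).1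
  have h2 := (hw.1 i hi).2
  have h3 := hpos i hi
  rw [abs_of_pos h3] at h1 h2
  exact ⟨h1, h2⟩

lemma pw_surj {m : ℕ} {w : ℕ → ℤ} (hw : IsSignedPerm m w)
    (hpos : ∀ i ∈ Finset.Icc 1 m, 0 < w i) {a : ℕ} (ha : a ∈ Finset.Icc 1 m) :
    ∃ i ∈ Finset.Icc 1 m, w i = (a:ℤ) := by
  obtain ⟨i, hi, habs⟩ := abs_surj hw ha
  exact ⟨i, hi, by rw [← habs, abs_of_pos (hpos i hi)]⟩

/-! ### The letters of a signed permutation -/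

open scoped Classical in
noncomputable def letters (n : ℕ) (u : ℕ → ℤ) : Finset ℤ := (Finset.Icc 2 n).image u

noncomputable def negSet (n : ℕ) (u : ℕ → ℤ) : Finset ℕ :=
  @Finset.filter _ (fun v => ∃ i ∈ Finset.Icc 2 n, u i = -(v:ℤ))
    (fun _ => Finset.decidableExistsAndFinset) ((Finset.Icc 1 n).erase (u 1).toNat)

lemma mem_letters {x : ℤ} : x ∈ letters n u ↔ ∃ i ∈ Finset.Icc 2 n, u i = x := by
  classical
  unfold letters
  rw [Finset.mem_image]

lemma u_mem_letters (hu : IsSignedPerm n u) {i : ℕ} (hi : i ∈ Finset.Icc 2 n) :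
    u i ∈ letters n u :=
  mem_letters.mpr ⟨i, hi, rfl⟩

lemma u_injOn' (hn : 2 ≤ n) (hu : IsSignedPerm n u) :
    Set.InjOn u (Finset.Icc 2 n : Finset ℕ) := by
  intro i hi j hj h
  simp only [Finset.mem_coe, Finset.mem_Icc] at hi hj
  exact u_injOn hu (by rw [Finset.mem_Icc]; omega) (by rw [Finset.mem_Icc]; omega) h

lemma letters_card (hn : 2 ≤ n) (hu : IsSignedPerm n u) : (letters n u).card = n - 1 := by
  classical
  unfold letters
  rw [Finset.card_image_of_injOn (u_injOn' hn hu), Nat.card_Icc]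
  omega

lemma rank_transfer (hn : 2 ≤ n) (hu : IsSignedPerm n u) (x : ℤ) :
    ((letters n u).filter (fun y => y < x)).card =
      ((Finset.Icc 2 n).filter (fun p => u p < x)).card := by
  classical
  unfold letters
  rw [Finset.filter_image]
  exact Finset.card_image_of_injOn ((u_injOn' hn hu).mono (by
    intro i hi
    exact Finset.mem_coe.mpr (Finset.mem_of_mem_filter i (Finset.mem_coe.mp hi))))

lemma rank_strict_mono (hn : 2 ≤ n) {x : ℤ} {i : ℕ} (hi : i ∈ Finset.Icc 2 n)
    (hux : u i < x) :
    ((Finset.Icc 2 n).filter (fun p => u p < u i)).card <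
      ((Finset.Icc 2 n).filter (fun p => u p < x)).card := by
  classical
  apply Finset.card_lt_card
  rw [Finset.ssubset_iff_of_subset]
  · exact ⟨i, by rw [Finset.mem_filter]; exact ⟨hi, hux⟩,
      by rw [Finset.mem_filter]; exact fun h => absurd h.2 (lt_irrefl _)⟩
  · intro p hp
    rw [Finset.mem_filter] at hp ⊢
    exact ⟨hp.1, lt_trans hp.2 hux⟩

lemma rank_lt_of_lt (hn : 2 ≤ n) (hu : IsSignedPerm n u) {i j : ℕ}
    (hi : i ∈ Finset.Icc 2 n) (hj : j ∈ Finset.Icc 2 n)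
    (h : ((Finset.Icc 2 n).filter (fun p => u p < u i)).card <
      ((Finset.Icc 2 n).filter (fun p => u p < u j)).card) : u i < u j := by
  rcases lt_trichotomy (u i) (u j) with hlt | heq | hgt
  · exact hlt
  · rw [heq] at h; omega
  · have := rank_strict_mono (u := u) hn hj hgt
    omega

lemma rank_eq_iff (hn : 2 ≤ n) (hu : IsSignedPerm n u) {i j : ℕ}
    (hi : i ∈ Finset.Icc 2 n) (hj : j ∈ Finset.Icc 2 n) :
    (((Finset.Icc 2 n).filter (fun p => u p < u i)).card =
      ((Finset.Icc 2 n).filter (fun p => u p < u j)).card) ↔ u i = u j := by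
  constructor
  · intro h
    rcases lt_trichotomy (u i) (u j) with hlt | heq | hgt
    · have := rank_strict_mono (u := u) hn hi hlt; omega
    · exact heq
    · have := rank_strict_mono (u := u) hn hj hgt; omega
  · intro h; rw [h]

/-! ### The domain of the bijection -/

open scoped Classical in
noncomputable def PW (m j : ℕ) : Finset (ℕ → ℤ) :=
  (SPF m).filter (fun w => (∀ i ∈ Finset.Icc 1 m, 0 < w i) ∧ descA m w = j)

lemma eulA_eq_card_PW (m j : ℕ) : eulA m j = (PW m j).card := by
  unfold eulA
  rw [← Set.ncard_coe_finset]
  congr 1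
  ext w
  simp only [PW, Finset.coe_filter, Set.mem_setOf_eq, mem_SPF, IsPermWord]
  tauto

open scoped Classical in
noncomputable def Dom (n j : ℕ) : Finset ((Σ _ : ℕ, Finset ℕ) × (ℕ → ℤ)) :=
  ((Finset.Icc 1 n).sigma (fun m => ((Finset.Icc 1 n).erase m).powerset)) ×ˢ PW (n-1) j

lemma card_Dom (n j : ℕ) : (Dom n j).card = n * 2 ^ (n - 1) * (PW (n-1) j).card := by
  classical
  unfold Dom
  rw [Finset.card_product, Finset.card_sigma]
  congr 1
  have : ∀ m ∈ Finset.Icc 1 n, (((Finset.Icc 1 n).erase m).powerset).card = 2 ^ (n-1) := by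
    intro m hm
    rw [Finset.card_powerset, Finset.card_erase_of_mem hm, Nat.card_Icc]
    norm_num
  rw [Finset.sum_congr rfl this, Finset.sum_const, Nat.card_Icc, smul_eq_mul]
  norm_num

lemma mem_Dom {j : ℕ} {p : (Σ _ : ℕ, Finset ℕ) × (ℕ → ℤ)} :
    p ∈ Dom n j ↔ (p.1.1 ∈ Finset.Icc 1 n ∧ p.1.2 ⊆ (Finset.Icc 1 n).erase p.1.1) ∧
      (IsSignedPerm (n-1) p.2 ∧ ((∀ i ∈ Finset.Icc 1 (n-1), 0 < p.2 i) ∧ descA (n-1) p.2 = j)) := by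
  classical
  unfold Dom PW
  simp only [Finset.mem_product, Finset.mem_sigma, Finset.mem_powerset, Finset.mem_filter,
    mem_SPF]

/-! ### The forward and backward maps -/

open scoped Classical in
noncomputable def fwd (n : ℕ) (p : (Σ _ : ℕ, Finset ℕ) × (ℕ → ℤ)) : ℕ → ℤ :=
  fun i => if i = 1 then (p.1.1 : ℤ)
    else if i ∈ Finset.Icc 2 n then pick (n-1) (sset n p.1.1 p.1.2) (p.2 (i - 1)) else 0

open scoped Classical in
noncomputable def bsnd (n : ℕ) (u : ℕ → ℤ) : ℕ → ℤ :=
  fun i => if i ∈ Finset.Icc 1 (n-1) then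
    1 + (((Finset.Icc 2 n).filter (fun p => u p < u (i + 1))).card : ℤ) else 0

noncomputable def bwd (n : ℕ) (u : ℕ → ℤ) : (Σ _ : ℕ, Finset ℕ) × (ℕ → ℤ) :=
  (⟨(u 1).toNat, negSet n u⟩, bsnd n u)

/-! ### Properties of the forward map -/

section FwdLemmas

variable {j m : ℕ} {N : Finset ℕ} {w : ℕ → ℤ}

lemma fwd_one : fwd n (⟨m, N⟩, w) 1 = (m:ℤ) := by simp [fwd]

lemma fwd_eq {i : ℕ} (hi : i ∈ Finset.Icc 2 n) :
    fwd n (⟨m, N⟩, w) i = pick (n-1) (sset n m N) (w (i-1)) := by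
  rw [Finset.mem_Icc] at hi
  unfold fwd
  rw [if_neg (show ¬ i = 1 by omega),
    if_pos (show i ∈ Finset.Icc 2 n by rw [Finset.mem_Icc]; omega)]

variable (hn : 2 ≤ n) (hm : m ∈ Finset.Icc 1 n) (hN : N ⊆ (Finset.Icc 1 n).erase m)
  (hw : IsSignedPerm (n-1) w) (hpos : ∀ i ∈ Finset.Icc 1 (n-1), 0 < w i)

include hn in
lemma fwd_outside {i : ℕ} (hi : i ∉ Finset.Icc 1 n) : fwd n (⟨m, N⟩, w) i = 0 := by
  rw [Finset.mem_Icc] at hi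
  unfold fwd
  rw [if_neg (show ¬ i = 1 by omega),
    if_neg (show i ∉ Finset.Icc 2 n by rw [Finset.mem_Icc]; omega)]

include hn hm hw hpos in
lemma w_toNat_bound {i : ℕ} (hi : i ∈ Finset.Icc 2 n) : (w (i-1)).toNat - 1 < n - 1 := by
  have hi1 : i - 1 ∈ Finset.Icc 1 (n-1) := by
    rw [Finset.mem_Icc] at hi ⊢; omega
  have hb := pw_bounds hw hpos hi1
  omega

include hn hm hw hpos in
lemma fwd_mem_sset {i : ℕ} (hi : i ∈ Finset.Icc 2 n) :
    fwd n (⟨m, N⟩, w) i ∈ sset n m N := by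
  rw [fwd_eq hi]
  exact pick_mem (sset_card hm) (w_toNat_bound hn hm hw hpos hi)

include hn hm hN hw hpos in
lemma fwd_isSignedPerm : IsSignedPerm n (fwd n (⟨m, N⟩, w)) := by
  have hmIcc := hm
  rw [Finset.mem_Icc] at hmIcc
  refine ⟨?_, ?_, fun i hi => fwd_outside hn hi⟩
  · intro i hi
    rw [Finset.mem_Icc] at hi
    by_cases h1 : i = 1
    · subst h1
      rw [fwd_one, abs_of_nonneg (by positivity)]
      constructor <;> omega
    · have hi2 : i ∈ Finset.Icc 2 n := by rw [Finset.mem_Icc]; omega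
      obtain ⟨v, hv, hvabs, _⟩ := sset_spec hN (fwd_mem_sset hn hm hw hpos hi2)
      have hv' := Finset.mem_of_mem_erase hv
      rw [Finset.mem_Icc] at hv'
      rw [hvabs]
      constructor <;> omega
  · intro i hi i' hi' habs
    rw [Finset.mem_Icc] at hi hi'
    by_cases h1 : i = 1 <;> by_cases h1' : i' = 1
    · omega
    · exfalso
      subst h1
      have hi2 : i' ∈ Finset.Icc 2 n := by rw [Finset.mem_Icc]; omega
      obtain ⟨v, hv, hvabs, _⟩ := sset_spec hN (fwd_mem_sset hn hm hw hpos hi2)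
      rw [fwd_one, hvabs, abs_of_nonneg (by positivity)] at habs
      have : m = v := by exact_mod_cast habs
      exact (Finset.ne_of_mem_erase hv) this.symm
    · exfalso
      subst h1'
      have hi2 : i ∈ Finset.Icc 2 n := by rw [Finset.mem_Icc]; omega
      obtain ⟨v, hv, hvabs, _⟩ := sset_spec hN (fwd_mem_sset hn hm hw hpos hi2)
      rw [fwd_one, hvabs, abs_of_nonneg (by positivity)] at habs
      have : v = m := by exact_mod_cast habs
      exact (Finset.ne_of_mem_erase hv) this
    · have hi2 : i ∈ Finset.Icc 2 n := by rw [Finset.mem_Icc]; omega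
      have hi2' : i' ∈ Finset.Icc 2 n := by rw [Finset.mem_Icc]; omega
      have hx := fwd_mem_sset hn hm hw hpos (N := N) hi2
      have hy := fwd_mem_sset hn hm hw hpos (N := N) hi2'
      have heq : fwd n (⟨m, N⟩, w) i = fwd n (⟨m, N⟩, w) i' := sset_abs_inj hN hx hy habs
      rw [fwd_eq hi2, fwd_eq hi2'] at heq
      have hb1 := pw_bounds hw hpos (show i - 1 ∈ Finset.Icc 1 (n-1) by
        rw [Finset.mem_Icc] at hi2 ⊢; omega)
      have hb2 := pw_bounds hw hpos (show i' - 1 ∈ Finset.Icc 1 (n-1) by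
        rw [Finset.mem_Icc] at hi2' ⊢; omega)
      have hww : w (i-1) = w (i'-1) :=
        pick_inj (sset_card hm) hb1.1 hb1.2 hb2.1 hb2.2 heq
      have : i - 1 = i' - 1 := by
        apply hw.2.1 _ (by rw [Finset.mem_Icc] at hi2 ⊢; omega)
          _ (by rw [Finset.mem_Icc] at hi2' ⊢; omega)
        rw [hww]
      omega

include hn hm hw hpos in
lemma fwd_rstat : rstat n (fwd n (⟨m, N⟩, w)) = descA (n-1) w := by
  classical
  unfold rstat descA
  have hstep : (Finset.Ico 2 n).filter (fun i => fwd n (⟨m, N⟩, w) (i+1) < fwd n (⟨m, N⟩, w) i)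
      = (Finset.Ico 2 n).filter (fun i => w i < w (i-1)) := by
    apply Finset.filter_congr
    intro i hi
    rw [Finset.mem_Ico] at hi
    have hi2 : i ∈ Finset.Icc 2 n := by rw [Finset.mem_Icc]; omega
    have hi2' : i + 1 ∈ Finset.Icc 2 n := by rw [Finset.mem_Icc]; omega
    rw [fwd_eq hi2, fwd_eq hi2']
    have he : i + 1 - 1 = i := by omega
    rw [he]
    have hb1 := pw_bounds hw hpos (show i ∈ Finset.Icc 1 (n-1) by rw [Finset.mem_Icc]; omega)
    have hb2 := pw_bounds hw hpos (show i - 1 ∈ Finset.Icc 1 (n-1) by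
      rw [Finset.mem_Icc]; omega)
    rw [pick_lt_pick (sset_card hm) hb1.1 hb1.2 hb2.1 hb2.2]
  rw [hstep]
  refine Finset.card_nbij' (fun i => i - 1) (fun i => i + 1) ?_ ?_ ?_ ?_
  · intro i hi
    simp only [Finset.mem_coe, Finset.mem_filter, Finset.mem_Ico, Finset.mem_Icc] at hi ⊢
    refine ⟨by omega, ?_⟩
    have he : i - 1 + 1 = i := by omega
    rw [he]
    exact hi.2
  · intro i hi
    simp only [Finset.mem_coe, Finset.mem_filter, Finset.mem_Ico, Finset.mem_Icc] at hi ⊢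
    refine ⟨by omega, ?_⟩
    have he : i + 1 - 1 = i := by omega
    rw [he]
    exact hi.2
  · intro i hi
    simp only [Finset.mem_coe, Finset.mem_filter, Finset.mem_Ico] at hi
    show i - 1 + 1 = i
    omega
  · intro i hi
    simp only [Finset.mem_coe, Finset.mem_filter, Finset.mem_Icc] at hi
    show i + 1 - 1 = i
    omega

include hn hm hw hpos in
lemma fwd_surj {x : ℤ} (hx : x ∈ sset n m N) :
    ∃ i ∈ Finset.Icc 2 n, fwd n (⟨m, N⟩, w) i = x := by
  classical
  set t := (sset n m N).orderIsoOfFin (sset_card hm) with htdef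
  set b := t.symm ⟨x, hx⟩ with hbdef
  have hb : (b : ℕ) < n - 1 := b.2
  obtain ⟨i', hi', hwi'⟩ := pw_surj hw hpos (a := (b : ℕ) + 1)
    (by rw [Finset.mem_Icc]; omega)
  rw [Finset.mem_Icc] at hi'
  refine ⟨i' + 1, by rw [Finset.mem_Icc]; omega, ?_⟩
  rw [fwd_eq (by rw [Finset.mem_Icc]; omega)]
  have he : i' + 1 - 1 = i' := by omega
  rw [he, hwi']
  have htn : (((b:ℕ) + 1 : ℕ) : ℤ).toNat - 1 < n - 1 := by
    simp only [Int.toNat_natCast]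
    omega
  rw [pick_eq (sset_card hm) htn]
  have hfin : (⟨(((b:ℕ) + 1 : ℕ) : ℤ).toNat - 1, htn⟩ : Fin (n-1)) = b := by
    apply Fin.ext
    simp only [Int.toNat_natCast]
    omega
  rw [hfin, hbdef, ← htdef, OrderIso.apply_symm_apply]

include hn hm hN hw hpos in
lemma letters_fwd : letters n (fwd n (⟨m, N⟩, w)) = sset n m N := by
  classical
  apply Finset.Subset.antisymm
  · intro x hx
    rw [mem_letters] at hx
    obtain ⟨i, hi, rfl⟩ := hx
    exact fwd_mem_sset hn hm hw hpos hi
  · intro x hx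
    obtain ⟨i, hi, hfx⟩ := fwd_surj hn hm hw hpos (N := N) hx
    rw [mem_letters]
    exact ⟨i, hi, hfx⟩

end FwdLemmas

/-! ### Properties of the backward map -/

section BwdLemmas

open scoped Classical

lemma bsnd_eq {i : ℕ} (hi : i ∈ Finset.Icc 1 (n-1)) :
    bsnd n u i = 1 + (((Finset.Icc 2 n).filter (fun p => u p < u (i + 1))).card : ℤ) := by
  unfold bsnd
  rw [if_pos hi]

lemma bsnd_outside {i : ℕ} (hi : i ∉ Finset.Icc 1 (n-1)) : bsnd n u i = 0 := by
  unfold bsnd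
  rw [if_neg hi]

lemma rank_bound (hn : 2 ≤ n) {i : ℕ} (hi : i ∈ Finset.Icc 1 (n-1)) :
    ((Finset.Icc 2 n).filter (fun p => u p < u (i+1))).card < n - 1 := by
  rw [Finset.mem_Icc] at hi
  have hmem : i + 1 ∈ Finset.Icc 2 n := by rw [Finset.mem_Icc]; omega
  have hsub : (Finset.Icc 2 n).filter (fun p => u p < u (i+1)) ⊆ (Finset.Icc 2 n).erase (i+1) := by
    intro p hp
    rw [Finset.mem_filter] at hp
    rw [Finset.mem_erase]
    exact ⟨fun h => absurd (h ▸ hp.2) (lt_irrefl _), hp.1⟩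
  have hle := Finset.card_le_card hsub
  rw [Finset.card_erase_of_mem hmem, Nat.card_Icc] at hle
  omega

lemma bsnd_isSignedPerm (hn : 2 ≤ n) (hu : IsSignedPerm n u) :
    IsSignedPerm (n-1) (bsnd n u) := by
  refine ⟨?_, ?_, fun i hi => bsnd_outside hi⟩
  · intro i hi
    rw [bsnd_eq hi]
    have hb := rank_bound hn (u := u) hi
    rw [abs_of_nonneg (by positivity)]
    constructor <;> omega
  · intro i hi i' hi' habs
    rw [bsnd_eq hi, bsnd_eq hi', abs_of_nonneg (by positivity),
      abs_of_nonneg (by positivity)] at habs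
    have hrk : ((Finset.Icc 2 n).filter (fun p => u p < u (i+1))).card =
        ((Finset.Icc 2 n).filter (fun p => u p < u (i'+1))).card := by omega
    rw [Finset.mem_Icc] at hi hi'
    have h2 : i + 1 ∈ Finset.Icc 2 n := by rw [Finset.mem_Icc]; omega
    have h2' : i' + 1 ∈ Finset.Icc 2 n := by rw [Finset.mem_Icc]; omega
    have huu := (rank_eq_iff hn hu h2 h2').mp hrk
    have := u_injOn hu (by rw [Finset.mem_Icc] at h2 ⊢; omega)
      (by rw [Finset.mem_Icc] at h2' ⊢; omega) huu
    omega

lemma bsnd_pos {i : ℕ} (hi : i ∈ Finset.Icc 1 (n-1)) : 0 < bsnd n u i := by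
  rw [bsnd_eq hi]
  positivity

lemma bsnd_descA (hn : 2 ≤ n) (hu : IsSignedPerm n u) :
    descA (n-1) (bsnd n u) = rstat n u := by
  unfold descA rstat
  have hstep : (Finset.Icc 1 (n-1-1)).filter (fun i => bsnd n u (i+1) < bsnd n u i)
      = (Finset.Icc 1 (n-1-1)).filter (fun i => u (i+1+1) < u (i+1)) := by
    apply Finset.filter_congr
    intro i hi
    rw [Finset.mem_Icc] at hi
    have hm1 : i ∈ Finset.Icc 1 (n-1) := by rw [Finset.mem_Icc]; omega
    have hm2 : i + 1 ∈ Finset.Icc 1 (n-1) := by rw [Finset.mem_Icc]; omega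
    have h2 : i + 1 ∈ Finset.Icc 2 n := by rw [Finset.mem_Icc]; omega
    have h2' : i + 1 + 1 ∈ Finset.Icc 2 n := by rw [Finset.mem_Icc]; omega
    rw [bsnd_eq hm1, bsnd_eq hm2]
    constructor
    · intro h
      have hrk : ((Finset.Icc 2 n).filter (fun p => u p < u (i+1+1))).card <
          ((Finset.Icc 2 n).filter (fun p => u p < u (i+1))).card := by
        exact_mod_cast by omega
      exact rank_lt_of_lt hn hu h2' h2 hrk
    · intro h
      have hrk := rank_strict_mono (u := u) hn h2' h
      exact_mod_cast by omega
  rw [hstep]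
  refine Finset.card_nbij' (fun i => i + 1) (fun i => i - 1) ?_ ?_ ?_ ?_
  · intro i hi
    simp only [Finset.mem_coe, Finset.mem_filter, Finset.mem_Icc, Finset.mem_Ico] at hi ⊢
    exact ⟨by omega, hi.2⟩
  · intro i hi
    simp only [Finset.mem_coe, Finset.mem_filter, Finset.mem_Icc, Finset.mem_Ico] at hi ⊢
    refine ⟨by omega, ?_⟩
    have he1 : i - 1 + 1 = i := by omega
    rw [he1]
    exact hi.2
  · intro i hi
    show i + 1 - 1 = i
    omega
  · intro i hi
    simp only [Finset.mem_coe, Finset.mem_filter, Finset.mem_Ico] at hi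
    show i - 1 + 1 = i
    omega

lemma u1_facts (hn : 2 ≤ n) (hu : IsSignedPerm n u) (h1 : 0 < u 1) :
    ((u 1).toNat : ℤ) = u 1 ∧ (u 1).toNat ∈ Finset.Icc 1 n := by
  have hb := hu.1 1 (one_mem_Icc (by omega))
  rw [abs_of_pos h1] at hb
  refine ⟨Int.toNat_of_nonneg h1.le, ?_⟩
  rw [Finset.mem_Icc]
  omega

lemma negSet_subset : negSet n u ⊆ (Finset.Icc 1 n).erase (u 1).toNat := by
  intro v hv
  unfold negSet at hv
  exact Finset.mem_of_mem_filter v hv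

lemma letters_eq_sset (hn : 2 ≤ n) (hu : IsSignedPerm n u) (h1 : 0 < u 1) :
    sset n (u 1).toNat (negSet n u) = letters n u := by
  obtain ⟨hcast, hmem⟩ := u1_facts hn hu h1
  apply Finset.eq_of_subset_of_card_le
  · intro x hx
    obtain ⟨v, hv, hvabs, hvsgn⟩ := sset_spec negSet_subset hx
    have hvIcc := Finset.mem_of_mem_erase hv
    have hvne : v ≠ (u 1).toNat := Finset.ne_of_mem_erase hv
    have hv1 : 1 ≤ v := by
      rw [Finset.mem_Icc] at hvIcc; omega
    by_cases hvN : v ∈ negSet n u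
    · have hvN' := hvN
      unfold negSet at hvN'
      obtain ⟨-, i, hi, hui⟩ := Finset.mem_filter.mp hvN'
      have hx0 : x < 0 := hvsgn.mpr hvN
      have hxv : x = -(v:ℤ) := by
        rw [abs_of_neg hx0] at hvabs
        omega
      rw [mem_letters]
      exact ⟨i, hi, by rw [hui, hxv]⟩
    · have hx0 : ¬ x < 0 := fun h => hvN (hvsgn.mp h)
      have hxv : x = (v:ℤ) := by
        rw [abs_of_nonneg (by omega)] at hvabs
        omega
      obtain ⟨p, hp, hpabs⟩ := abs_surj hu hvIcc
      have hp1 : p ≠ 1 := by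
        intro h
        rw [h, abs_of_pos h1] at hpabs
        exact hvne (by omega)
      have hp2 : p ∈ Finset.Icc 2 n := by
        rw [Finset.mem_Icc] at hp ⊢
        omega
      have hup : u p = (v:ℤ) ∨ u p = -(v:ℤ) := by
        rcases abs_cases (u p) with ⟨h', _⟩ | ⟨h', _⟩
        · left; omega
        · right; omega
      rcases hup with h' | h'
      · rw [mem_letters]
        exact ⟨p, hp2, by rw [h', hxv]⟩
      · exfalso
        apply hvN
        unfold negSet
        rw [Finset.mem_filter]
        exact ⟨hv, p, hp2, h'⟩
  · rw [letters_card hn hu, sset_card hmem]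

lemma bwd_mem_Dom (hn : 2 ≤ n) (hu : IsSignedPerm n u) (h1 : 0 < u 1) {j : ℕ}
    (hr : rstat n u = j) : bwd n u ∈ Dom n j := by
  rw [mem_Dom]
  exact ⟨⟨(u1_facts hn hu h1).2, negSet_subset⟩, bsnd_isSignedPerm hn hu,
    fun i hi => bsnd_pos hi, by show descA (n-1) (bsnd n u) = j; rw [bsnd_descA hn hu]; exact hr⟩

end BwdLemmas

/-! ### The compositions -/

section Comp

variable {j m : ℕ} {N : Finset ℕ} {w : ℕ → ℤ}
variable (hn : 2 ≤ n) (hm : m ∈ Finset.Icc 1 n) (hN : N ⊆ (Finset.Icc 1 n).erase m)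
  (hw : IsSignedPerm (n-1) w) (hpos : ∀ i ∈ Finset.Icc 1 (n-1), 0 < w i)

include hn hm hN hw hpos in
lemma bwd_fwd : bwd n (fwd n (⟨m, N⟩, w)) = (⟨m, N⟩, w) := by
  classical
  set U := fwd n (⟨m, N⟩, w) with hU
  have hU1 : U 1 = (m:ℤ) := fwd_one
  have hUtoNat : (U 1).toNat = m := by rw [hU1]; exact Int.toNat_natCast m
  have h2 : negSet n U = N := by
    ext v
    unfold negSet
    rw [Finset.mem_filter, hUtoNat]
    constructor
    · rintro ⟨hv, i, hi, hui⟩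
      have hvIcc := Finset.mem_of_mem_erase hv
      have hv1 : 1 ≤ v := by rw [Finset.mem_Icc] at hvIcc; omega
      have hmem : -(v:ℤ) ∈ sset n m N := by
        rw [← hui]
        exact fwd_mem_sset hn hm hw hpos hi
      obtain ⟨v', hv', habs, hsgn⟩ := sset_spec hN hmem
      have hvv : v' = v := by
        rw [abs_neg, abs_of_nonneg (by positivity)] at habs
        exact_mod_cast habs.symm
      rw [← hvv]
      exact hsgn.mp (by omega)
    · intro hvN
      refine ⟨hN hvN, ?_⟩
      obtain ⟨i, hi, hfi⟩ := fwd_surj hn hm hw hpos (sset_mem_of_mem_N hN hvN)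
      exact ⟨i, hi, hfi⟩
  have h3 : bsnd n U = w := by
    funext i
    by_cases hi : i ∈ Finset.Icc 1 (n-1)
    · rw [bsnd_eq hi]
      have hU' : IsSignedPerm n U := fwd_isSignedPerm hn hm hN hw hpos
      have hi2 : i + 1 ∈ Finset.Icc 2 n := by rw [Finset.mem_Icc] at hi ⊢; omega
      have hee : i + 1 - 1 = i := by omega
      have hUi : U (i+1) = pick (n-1) (sset n m N) (w i) := by
        rw [hU, fwd_eq hi2, hee]
      have hb : (w i).toNat - 1 < n - 1 := by
        have := w_toNat_bound hn hm hw hpos hi2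
        rw [hee] at this
        exact this
      have hUi' : U (i+1) =
          (((sset n m N).orderIsoOfFin (sset_card hm)) ⟨(w i).toNat - 1, hb⟩ : ℤ) := by
        rw [hUi, pick_eq (sset_card hm) hb]
      have hrk : ((Finset.Icc 2 n).filter (fun p => U p < U (i+1))).card = (w i).toNat - 1 := by
        rw [← rank_transfer hn hU', letters_fwd hn hm hN hw hpos, hUi']
        exact rank_orderIso_apply (sset_card hm) _
      rw [hrk]
      have hwb := pw_bounds hw hpos hi
      omega
    · rw [bsnd_outside hi]
      exact (hw.2.2 i hi).symm
  have hdef : bwd n U = (⟨(U 1).toNat, negSet n U⟩, bsnd n U) := rfl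
  rw [hdef, hUtoNat, h2, h3]

lemma fwd_bwd (hn : 2 ≤ n) (hu : IsSignedPerm n u) (h1 : 0 < u 1) :
    fwd n (bwd n u) = u := by
  classical
  obtain ⟨hcast, hmem⟩ := u1_facts hn hu h1
  have hbwd : bwd n u = (⟨(u 1).toNat, negSet n u⟩, bsnd n u) := rfl
  funext i
  by_cases hi1 : i = 1
  · subst hi1
    rw [hbwd, fwd_one, hcast]
  · by_cases hi : i ∈ Finset.Icc 2 n
    · rw [hbwd, fwd_eq hi]
      have him1 : i - 1 ∈ Finset.Icc 1 (n-1) := by rw [Finset.mem_Icc] at hi ⊢; omega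
      rw [bsnd_eq him1]
      have hee : i - 1 + 1 = i := by rw [Finset.mem_Icc] at hi; omega
      rw [hee]
      have hρ : ((Finset.Icc 2 n).filter (fun p => u p < u i)).card < n - 1 := by
        have := rank_bound hn (u := u) him1
        rw [hee] at this
        exact this
      set ρ := ((Finset.Icc 2 n).filter (fun p => u p < u i)).card with hρdef
      have htn : (1 + (ρ:ℤ)).toNat - 1 < n - 1 := by omega
      rw [pick_eq (sset_card hmem) htn]
      have hxmem : u i ∈ sset n (u 1).toNat (negSet n u) := by
        rw [letters_eq_sset hn hu h1]
        exact u_mem_letters hu hi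
      have hrank : ((sset n (u 1).toNat (negSet n u)).filter (fun y => y < u i)).card = ρ := by
        rw [letters_eq_sset hn hu h1, hρdef]
        exact rank_transfer hn hu (u i)
      have hlt : ((sset n (u 1).toNat (negSet n u)).filter (fun y => y < u i)).card < n - 1 := by
        rw [hrank]; exact hρ
      have hfin : (⟨(1 + (ρ:ℤ)).toNat - 1, htn⟩ : Fin (n-1)) =
          ⟨((sset n (u 1).toNat (negSet n u)).filter (fun y => y < u i)).card, hlt⟩ := by
        apply Fin.ext
        simp only
        rw [hrank]
        omega
      rw [hfin]
      exact orderIso_apply_of_rank (sset_card hmem) hxmem hlt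
    · have hiO : i ∉ Finset.Icc 1 n := by
        rw [Finset.mem_Icc] at hi ⊢
        omega
      rw [hbwd, fwd_outside hn hiO]
      exact (hu.2.2 i hiO).symm

end Comp

open scoped Classical in
lemma claimC (hn : 2 ≤ n) (j : ℕ) :
    ((SPF n).filter (fun u => 0 < u 1 ∧ rstat n u = j)).card =
      n * 2 ^ (n-1) * eulA (n-1) j := by
  rw [eulA_eq_card_PW, ← card_Dom]
  refine Finset.card_nbij' (bwd n) (fwd n) ?_ ?_ ?_ ?_
  · intro u hu
    simp only [Finset.mem_coe, Finset.mem_filter, mem_SPF] at hu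
    exact bwd_mem_Dom hn hu.1 hu.2.1 hu.2.2
  · intro p hp
    obtain ⟨⟨m, N⟩, w⟩ := p
    rw [Finset.mem_coe, mem_Dom] at hp
    obtain ⟨⟨hm, hN⟩, hw, hpos, hdesc⟩ := hp
    simp only [Finset.mem_coe, Finset.mem_filter, mem_SPF]
    refine ⟨fwd_isSignedPerm hn hm hN hw hpos, ?_, ?_⟩
    · rw [fwd_one]
      have hmm := Finset.mem_Icc.mp hm
      show (0:ℤ) < (m:ℤ)
      exact_mod_cast hmm.1
    · rw [fwd_rstat hn hm hw hpos]
      exact hdesc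
  · intro u hu
    simp only [Finset.mem_coe, Finset.mem_filter, mem_SPF] at hu
    exact fwd_bwd hn hu.1 hu.2.1
  · intro p hp
    obtain ⟨⟨m, N⟩, w⟩ := p
    rw [Finset.mem_coe, mem_Dom] at hp
    obtain ⟨⟨hm, hN⟩, hw, hpos, hdesc⟩ := hp
    exact bwd_fwd hn hm hN hw hpos

end StembridgeAux

open StembridgeAux

/-- Stembridge's identity: `D(n,k) = B(n,k) − n·2^{n−1}·A(n−1,k−1)` (with `A(n−1,−1) := 0`),
for `n ≥ 2` and `0 ≤ k ≤ n`. -/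
theorem stembridge_eulD (n k : ℕ) (hn : 2 ≤ n) (hk : k ≤ n) :
    (eulD n k : ℤ) =
      (eulB n k : ℤ) -
        (n : ℤ) * 2 ^ (n - 1) * (if k = 0 then 0 else (eulA (n - 1) (k - 1) : ℤ)) := by
  classical
  have hD0 : eulD n k = ((SPF n).filter (fun u => IsEvenSigned n u ∧ descD n u = k)).card :=
    ncard_eq_card_filter n _
  have hB0 : eulB n k = ((SPF n).filter (fun u => descB n u = k)).card :=
    ncard_eq_card_filter n _
  have hA := claimA hn k
  have hB := claimB hn k
  by_cases hk0 : k = 0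
  · subst hk0
    rw [if_pos rfl]
    rw [if_pos rfl] at hB
    have heq : eulB n 0 = eulD n 0 := by
      rw [hB0, hB, hD0, hA, Nat.add_zero]
    rw [heq]
    ring
  · rw [if_neg hk0]
    rw [if_neg hk0] at hB
    have hC := claimC hn (k-1)
    have hnat : eulB n k = eulD n k + n * 2 ^ (n-1) * eulA (n-1) (k-1) := by
      rw [hB0, hB, hD0, hA, hC]
    have hint := congrArg (fun x : ℕ => (x:ℤ)) hnat
    push_cast at hint
    linarith
end
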